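/- arXiv:math-ph/9908004 — 8 statements merged into one kernel-verified Lean document; each statement's English description precedes it below -/
import Mathlib

section
/- For 0 < q < 1, integers v ≤ n and w ≤ m, the partition function Z(n,m) = q^{n(n+1)}·binom_{q^2}(n+m,n) satisfies the bound Z(n-v, m-w) ≤ q^{-2nv + v(v-1)} · Z(n,m). -/
open Finset

/-- The partition function in product form. -/
noncomputable def ZG (q : ℝ) (n m : ℕ) : ℝ :=
  q ^ (n * (n + 1)) * (∏ i ∈ Finset.Icc 1 (n + m), (1 - q ^ (2 * i))) /
    ((∏ i ∈ Finset.Icc 1 n, (1 - q ^ (2 * i))) *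
      (∏ i ∈ Finset.Icc 1 m, (1 - q ^ (2 * i))))



open Finset

noncomputable def PP (q : ℝ) (k : ℕ) : ℝ := ∏ i ∈ Finset.Icc 1 k, (1 - q ^ (2 * i))

lemma PP_pos {q : ℝ} (hq0 : 0 < q) (hq1 : q < 1) (k : ℕ) : 0 < PP q k := by
  apply Finset.prod_pos
  intro i hi
  have hi1 : 1 ≤ i := (Finset.mem_Icc.mp hi).1
  have : q ^ (2 * i) < 1 := pow_lt_one₀ hq0.le hq1 (by omega)
  linarith

lemma PP_succ (q : ℝ) (k : ℕ) : PP q (k + 1) = PP q k * (1 - q ^ (2 * (k + 1))) := by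
  simpa [PP] using Finset.prod_Icc_succ_top (by omega : 1 ≤ k + 1)
    (fun i => (1 - q ^ (2 * i)))

noncomputable def BB (q : ℝ) (n m : ℕ) : ℝ := PP q (n + m) / (PP q n * PP q m)

lemma BB_pos {q : ℝ} (hq0 : 0 < q) (hq1 : q < 1) (n m : ℕ) : 0 < BB q n m :=
  div_pos (PP_pos hq0 hq1 _) (mul_pos (PP_pos hq0 hq1 _) (PP_pos hq0 hq1 _))

lemma BB_comm (q : ℝ) (n m : ℕ) : BB q n m = BB q m n := by
  simp [BB, Nat.add_comm, mul_comm]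

lemma BB_step {q : ℝ} (hq0 : 0 < q) (hq1 : q < 1) (n m : ℕ) :
    BB q n m ≤ BB q (n + 1) m := by
  have h1 : BB q (n + 1) m = BB q n m *
      ((1 - q ^ (2 * (n + m + 1))) / (1 - q ^ (2 * (n + 1)))) := by
    have e1 : PP q (n + 1 + m) = PP q (n + m) * (1 - q ^ (2 * (n + m + 1))) := by
      rw [show n + 1 + m = (n + m) + 1 by omega, PP_succ]
    have e2 := PP_succ q n
    have hn : PP q n ≠ 0 := (PP_pos hq0 hq1 n).ne'
    have hm : PP q m ≠ 0 := (PP_pos hq0 hq1 m).ne'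
    have hf : (1 : ℝ) - q ^ (2 * (n + 1)) ≠ 0 := by
      have : q ^ (2 * (n + 1)) < 1 := pow_lt_one₀ hq0.le hq1 (by omega)
      linarith
    rw [BB, BB, e1, e2]
    field_simp
  rw [h1]
  have hf : (0 : ℝ) < 1 - q ^ (2 * (n + 1)) := by
    have : q ^ (2 * (n + 1)) < 1 := pow_lt_one₀ hq0.le hq1 (by omega)
    linarith
  have hr : (1 : ℝ) ≤ (1 - q ^ (2 * (n + m + 1))) / (1 - q ^ (2 * (n + 1))) := by
    rw [le_div_iff₀ hf]
    have : q ^ (2 * (n + m + 1)) ≤ q ^ (2 * (n + 1)) :=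
      pow_le_pow_of_le_one hq0.le hq1.le (by omega)
    linarith
  exact le_mul_of_one_le_right (BB_pos hq0 hq1 n m).le hr

lemma BB_mono_left {q : ℝ} (hq0 : 0 < q) (hq1 : q < 1) {k n : ℕ} (h : k ≤ n) (m : ℕ) :
    BB q k m ≤ BB q n m := by
  induction n with
  | zero => simp [Nat.le_zero.mp h]
  | succ n ih =>
    rcases Nat.lt_or_ge k (n + 1) with h' | h'
    · exact (ih (by omega)).trans (BB_step hq0 hq1 n m)
    · have : k = n + 1 := by omega
      simp [this]

lemma BB_mono {q : ℝ} (hq0 : 0 < q) (hq1 : q < 1) {k n l m : ℕ} (h1 : k ≤ n) (h2 : l ≤ m) :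
    BB q k l ≤ BB q n m := by
  calc BB q k l ≤ BB q n l := BB_mono_left hq0 hq1 h1 l
    _ = BB q l n := BB_comm q n l
    _ ≤ BB q m n := BB_mono_left hq0 hq1 h2 n
    _ = BB q n m := (BB_comm q n m).symm

lemma ZG_eq (q : ℝ) (n m : ℕ) : ZG q n m = q ^ (n * (n + 1)) * BB q n m := by
  rw [ZG, BB, PP, PP, PP, mul_div_assoc]

theorem stmt8 (q : ℝ) (hq0 : 0 < q) (hq1 : q < 1) (n m v w : ℕ)
    (hv : v ≤ n) (hw : w ≤ m) :
    ZG q (n - v) (m - w) ≤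
      q ^ ((v : ℤ) * ((v : ℤ) - 1) - 2 * (n : ℤ) * (v : ℤ)) * ZG q n m := by
  have hqne : q ≠ 0 := hq0.ne'
  rw [ZG_eq, ZG_eq]
  have hexp : q ^ ((n - v) * (n - v + 1)) =
      q ^ ((v : ℤ) * ((v : ℤ) - 1) - 2 * (n : ℤ) * (v : ℤ)) * q ^ (n * (n + 1)) := by
    rw [← zpow_natCast q ((n - v) * (n - v + 1)), ← zpow_natCast q (n * (n + 1)),
      ← zpow_add₀ hqne]
    congr 1
    push_cast [Nat.cast_sub hv]
    ring
  rw [hexp, mul_assoc]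
  apply mul_le_mul_of_nonneg_left _ (zpow_nonneg hq0.le _)
  exact mul_le_mul_of_nonneg_left
    (BB_mono hq0 hq1 (Nat.sub_le n v) (Nat.sub_le m w)) (pow_nonneg hq0.le _)
end

section
/- The generalized partition functions satisfy the spin-flip/time-reversal identity: Z(n',m';n,m)/q^{(n+m')(n+m'+1)} = Z(m',n';m,n)/q^{(n'+m)(n'+m+1)} (as an identity of rational functions in q, for n' ≤ n, m' ≤ m). -/
open Finset

/-- Generalized partition function: the sum over monotone lattice paths from
`(n',m')` to `(n,m)`, encoded by the set `S` of coordinate sums of the right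
endpoints of the `n-n'` horizontal steps, of `q^{2∑_{s∈S} s}`. -/
noncomputable def ZGen (q : ℝ) (n' m' n m : ℕ) : ℝ :=
  ∑ S ∈ (Finset.Icc (n' + m' + 1) (n + m)).powersetCard (n - n'),
    q ^ (2 * ∑ x ∈ S, x)

lemma gaussIcc (a : ℕ) : ∀ n : ℕ, (∑ x ∈ Icc (a + 1) (a + n), x) * 2 = n * (2 * a + n + 1)
  | 0 => by simp
  | n + 1 => by
    rw [← add_assoc, Finset.sum_Icc_succ_top (by omega), add_mul, gaussIcc a n]
    ring

lemma flipZ (q : ℝ) (a dn dm : ℕ) :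
    (∑ S ∈ (Icc (a + 1) (a + dn + dm)).powersetCard dn, q ^ (2 * ∑ x ∈ S, x))
        * q ^ ((a + dm) * (a + dm + 1)) =
    (∑ T ∈ (Icc (a + 1) (a + dn + dm)).powersetCard dm, q ^ (2 * ∑ x ∈ T, x))
        * q ^ ((a + dn) * (a + dn + 1)) := by
  set I : Finset ℕ := Icc (a + 1) (a + dn + dm) with hI
  set K : ℕ := 2 * a + dn + dm + 1 with hK
  set r : ℕ → ℕ := fun x => K - x with hr
  set φ : Finset ℕ → Finset ℕ := fun S => I \ S.image r with hφ
  have hmemI : ∀ x, x ∈ I ↔ a + 1 ≤ x ∧ x ≤ a + dn + dm := by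
    intro x; rw [hI, Finset.mem_Icc]
  have hrI : ∀ x ∈ I, r x ∈ I := by
    intro x hx; rw [hmemI] at hx ⊢; simp only [hr, hK]; omega
  have hrr : ∀ x ∈ I, r (r x) = x := by
    intro x hx; rw [hmemI] at hx; simp only [hr, hK]; omega
  have hinjI : ∀ S : Finset ℕ, S ⊆ I → Set.InjOn r S := by
    intro S hS x hx y hy hxy
    have h1 := hS hx; have h2 := hS hy
    rw [hmemI] at h1 h2; simp only [hr, hK] at hxy; omega
  have hcardI : I.card = dn + dm := by rw [hI, Nat.card_Icc]; omega
  have hkey : ∀ S : Finset ℕ, S ⊆ I → ∀ x ∈ I, (x ∈ φ S ↔ r x ∉ S) := by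
    intro S hS x hx
    simp only [hφ, Finset.mem_sdiff, hx, true_and, Finset.mem_image]
    constructor
    · intro h hc; exact h ⟨r x, hc, hrr x hx⟩
    · rintro h ⟨z, hz, rfl⟩
      exact h (by rwa [hrr z (hS hz)])
  have hφφ : ∀ S : Finset ℕ, S ⊆ I → φ (φ S) = S := by
    intro S hS
    ext x
    by_cases hx : x ∈ I
    · rw [hkey _ (Finset.sdiff_subset) x hx, hkey S hS (r x) (hrI x hx), hrr x hx, not_not]
    · constructor
      · intro h; exact absurd (Finset.sdiff_subset h) hx
      · intro h; exact absurd (hS h) hx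
  have hmem : ∀ (k l : ℕ), k + l = dn + dm → ∀ S ∈ I.powersetCard k, φ S ∈ I.powersetCard l := by
    intro k l hkl S hS
    rw [Finset.mem_powersetCard] at hS ⊢
    obtain ⟨hSsub, hScard⟩ := hS
    have himg : S.image r ⊆ I := by
      intro x hx; rw [Finset.mem_image] at hx; obtain ⟨z, hz, rfl⟩ := hx
      exact hrI z (hSsub hz)
    refine ⟨Finset.sdiff_subset, ?_⟩
    rw [Finset.card_sdiff_of_subset himg, Finset.card_image_of_injOn (hinjI S hSsub), hcardI, hScard]
    omega
  -- exponent computation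
  have hexp : ∀ S ∈ I.powersetCard dn,
      2 * (∑ x ∈ S, x) + (a + dm) * (a + dm + 1)
        = 2 * (∑ x ∈ φ S, x) + (a + dn) * (a + dn + 1) := by
    intro S hS
    rw [Finset.mem_powersetCard] at hS
    obtain ⟨hSsub, hScard⟩ := hS
    have himg : S.image r ⊆ I := by
      intro x hx; rw [Finset.mem_image] at hx; obtain ⟨z, hz, rfl⟩ := hx
      exact hrI z (hSsub hz)
    have h1 : (∑ x ∈ φ S, x) + (∑ x ∈ S.image r, x) = ∑ x ∈ I, x :=
      Finset.sum_sdiff himg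
    have h2 : (∑ x ∈ S.image r, x) + (∑ x ∈ S, x) = dn * K := by
      rw [Finset.sum_image (hinjI S hSsub), ← Finset.sum_add_distrib, ← hScard,
        ← Finset.sum_const_nat (m := K)]
      intro x hx
      have := hSsub hx; rw [hmemI] at this; simp only [hr]; omega
    have h3 : (∑ x ∈ I, x) * 2 = (dn + dm) * K := by
      rw [hI, show a + dn + dm = a + (dn + dm) by ring, gaussIcc a (dn + dm), hK]; ring
    zify at h1 h2 h3 hK ⊢
    linear_combination (-2 : ℤ) * h1 + 2 * h2 - h3 + ((dn : ℤ) - dm) * hK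
  rw [Finset.sum_mul, Finset.sum_mul]
  refine Finset.sum_nbij' φ φ (hmem dn dm rfl) (hmem dm dn (by omega)) ?_ ?_ ?_
  · intro S hS
    exact hφφ S (Finset.mem_powersetCard.mp hS).1
  · intro S hS
    exact hφφ S (Finset.mem_powersetCard.mp hS).1
  · intro S hS
    rw [← pow_add, ← pow_add, hexp S hS]

theorem stmt11 (q : ℝ) (hq : q ≠ 0) (n' m' n m : ℕ)
    (hn : n' ≤ n) (hm : m' ≤ m) :
    ZGen q n' m' n m / q ^ ((n + m') * (n + m' + 1)) =
      ZGen q m' n' m n / q ^ ((n' + m) * (n' + m + 1)) := by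
  obtain ⟨dn, rfl⟩ := Nat.exists_eq_add_of_le hn
  obtain ⟨dm, rfl⟩ := Nat.exists_eq_add_of_le hm
  rw [div_eq_div_iff (pow_ne_zero _ hq) (pow_ne_zero _ hq)]
  unfold ZGen
  have ha : n' + dn + (m' + dm) = n' + m' + dn + dm := by ring
  have hb : m' + dm + (n' + dn) = n' + m' + dn + dm := by ring
  have hc : m' + n' + 1 = n' + m' + 1 := by ring
  have hd : n' + (m' + dm) = n' + m' + dm := by ring
  have he : n' + dn + m' = n' + m' + dn := by ring
  simp only [ha, hb, hc, hd, he, Nat.add_sub_cancel_left]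
  exact flipZ q (n' + m') dn dm
end

section
/- In the probability model on monotone lattice paths from (0,0) to (n,m) with path p receiving probability w(p)/Z(n,m), where w(p) = prod over horizontal steps q^{2(x+y)}, the probability that a path passes through the point (x,y) (with x ≤ n, y ≤ m, paths through (x,y)) equals q^{2(x+y)(n-x)}·Z(x,y)·Z(n-x,m-y)/Z(n,m). -/
open Finset

/-- Weighted path partition function. -/
noncomputable def Z (q : ℝ) (n m : ℕ) : ℝ :=
  ∑ S ∈ (Finset.Icc 1 (n + m)).powersetCard n, q ^ (2 * ∑ x ∈ S, x)

/-- A path (encoded by the set `S` of positions of horizontal steps) passes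
through the point `(x,y)` iff exactly `x` of its first `x+y` steps are
horizontal. The probability of passing through `(x,y)` equals
`q^{2(x+y)(n-x)} Z(x,y) Z(n-x,m-y) / Z(n,m)`. -/
theorem stmt12 (q : ℝ) (hq0 : 0 < q) (hq1 : q < 1) (n m x y : ℕ)
    (hx : x ≤ n) (hy : y ≤ m) :
    (∑ S ∈ ((Finset.Icc 1 (n + m)).powersetCard n).filter
        (fun S => (S ∩ Finset.Icc 1 (x + y)).card = x),
      q ^ (2 * ∑ a ∈ S, a)) / Z q n m
    = q ^ (2 * (x + y) * (n - x)) * Z q x y * Z q (n - x) (m - y) / Z q n m := by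
  congr 1
  set k := x + y with hk
  have hnm : (n - x) + (m - y) = n + m - k := by omega
  have hrhs : q ^ (2 * k * (n - x)) * Z q x y * Z q (n - x) (m - y)
      = ∑ p ∈ (Finset.Icc 1 k).powersetCard x ×ˢ
          (Finset.Icc 1 (n + m - k)).powersetCard (n - x),
          q ^ (2 * k * (n - x) + 2 * ∑ a ∈ p.1, a + 2 * ∑ b ∈ p.2, b) := by
    rw [Z, Z, hnm, ← hk, mul_assoc, Finset.sum_mul_sum, Finset.mul_sum]
    simp_rw [Finset.mul_sum]
    rw [← Finset.sum_product']
    refine Finset.sum_congr rfl fun p _ => ?_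
    rw [pow_add, pow_add]
    ring
  rw [hrhs]
  refine Finset.sum_nbij' (i := fun S => (S ∩ Finset.Icc 1 k,
      (S \ Finset.Icc 1 k).image (fun a => a - k)))
    (j := fun p => p.1 ∪ p.2.image (fun b => b + k)) ?_ ?_ ?_ ?_ ?_
  · intro S hS
    simp only [Finset.mem_filter, Finset.mem_powersetCard] at hS
    obtain ⟨⟨hsub, hcard⟩, hfil⟩ := hS
    simp only [Finset.mem_product, Finset.mem_powersetCard]
    refine ⟨⟨Finset.inter_subset_right, hfil⟩, ?_, ?_⟩
    · intro b hb
      simp only [Finset.mem_image, Finset.mem_sdiff, Finset.mem_Icc] at hb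
      obtain ⟨a, ⟨haS, hak⟩, rfl⟩ := hb
      have h2 := hsub haS
      simp only [Finset.mem_Icc] at h2
      simp only [Finset.mem_Icc]
      omega
    · rw [Finset.card_image_of_injOn]
      · have h3 := Finset.card_sdiff_add_card_inter S (Finset.Icc 1 k)
        omega
      · intro a ha b hb hab
        rw [Finset.mem_coe, Finset.mem_sdiff] at ha hb
        have h2 := hsub ha.1; have h3 := hsub hb.1
        simp only [Finset.mem_Icc] at h2 h3 ha hb
        have hab' : a - k = b - k := hab
        omega
  · intro p hp
    simp only [Finset.mem_product, Finset.mem_powersetCard] at hp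
    obtain ⟨⟨hA, hAc⟩, hB, hBc⟩ := hp
    have hAk : ∀ a ∈ p.1, 1 ≤ a ∧ a ≤ k := fun a ha => by
      have h := hA ha; simp only [Finset.mem_Icc] at h; exact h
    have hBk : ∀ b ∈ p.2, 1 ≤ b ∧ b ≤ n + m - k := fun b hb => by
      have h := hB hb; simp only [Finset.mem_Icc] at h; exact h
    simp only [Finset.mem_filter, Finset.mem_powersetCard]
    have hdisj : Disjoint p.1 (p.2.image (fun b => b + k)) := by
      rw [Finset.disjoint_left]
      intro a ha hb
      simp only [Finset.mem_image] at hb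
      obtain ⟨b, hb, rfl⟩ := hb
      have h1 := hAk _ ha; have h2 := hBk _ hb; omega
    refine ⟨⟨?_, ?_⟩, ?_⟩
    · intro a ha
      simp only [Finset.mem_union, Finset.mem_image] at ha
      simp only [Finset.mem_Icc]
      rcases ha with h | ⟨b, hb, rfl⟩
      · have h1 := hAk _ h; omega
      · have h1 := hBk _ hb; omega
    · rw [Finset.card_union_of_disjoint hdisj, hAc,
        Finset.card_image_of_injective _ (add_left_injective k), hBc]
      omega
    · have he : (p.1 ∪ p.2.image (fun b => b + k)) ∩ Finset.Icc 1 k = p.1 := by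
        rw [Finset.union_inter_distrib_right]
        have h1 : p.1 ∩ Finset.Icc 1 k = p.1 := Finset.inter_eq_left.mpr hA
        have h2 : p.2.image (fun b => b + k) ∩ Finset.Icc 1 k = ∅ := by
          rw [Finset.eq_empty_iff_forall_notMem]
          intro a ha
          simp only [Finset.mem_inter, Finset.mem_image, Finset.mem_Icc] at ha
          obtain ⟨⟨b, hb, rfl⟩, h⟩ := ha
          have h3 := hBk _ hb; omega
        rw [h1, h2, Finset.union_empty]
      rw [he, hAc]
  · intro S hS
    simp only [Finset.mem_filter, Finset.mem_powersetCard] at hS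
    obtain ⟨⟨hsub, hcard⟩, hfil⟩ := hS
    have hDk : ∀ a ∈ S \ Finset.Icc 1 k, k < a := by
      intro a ha
      rw [Finset.mem_sdiff, Finset.mem_Icc] at ha
      have h2 := hsub ha.1
      rw [Finset.mem_Icc] at h2
      omega
    have he : ∀ a ∈ S \ Finset.Icc 1 k,
        ((fun b => b + k) ∘ (fun a => a - k)) a = id a := by
      intro a ha
      have := hDk a ha
      simp only [Function.comp_apply, id]
      omega
    simp only
    rw [Finset.image_image, Finset.image_congr he, Finset.image_id, Finset.union_comm,
      Finset.sdiff_union_inter]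
  · intro p hp
    simp only [Finset.mem_product, Finset.mem_powersetCard] at hp
    obtain ⟨⟨hA, hAc⟩, hB, hBc⟩ := hp
    have hAk : ∀ a ∈ p.1, 1 ≤ a ∧ a ≤ k := fun a ha => by
      have h := hA ha; simp only [Finset.mem_Icc] at h; exact h
    have hBk : ∀ b ∈ p.2, 1 ≤ b ∧ b ≤ n + m - k := fun b hb => by
      have h := hB hb; simp only [Finset.mem_Icc] at h; exact h
    have h1 : (p.1 ∪ p.2.image (fun b => b + k)) ∩ Finset.Icc 1 k = p.1 := by
      rw [Finset.union_inter_distrib_right]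
      have e1 : p.1 ∩ Finset.Icc 1 k = p.1 := Finset.inter_eq_left.mpr hA
      have e2 : p.2.image (fun b => b + k) ∩ Finset.Icc 1 k = ∅ := by
        rw [Finset.eq_empty_iff_forall_notMem]
        intro a ha
        simp only [Finset.mem_inter, Finset.mem_image, Finset.mem_Icc] at ha
        obtain ⟨⟨b, hb, rfl⟩, h⟩ := ha
        have h3 := hBk _ hb; omega
      rw [e1, e2, Finset.union_empty]
    have h2 : (p.1 ∪ p.2.image (fun b => b + k)) \ Finset.Icc 1 k
        = p.2.image (fun b => b + k) := by
      ext a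
      simp only [Finset.mem_sdiff, Finset.mem_union, Finset.mem_image, Finset.mem_Icc]
      constructor
      · rintro ⟨h | h, hn⟩
        · exact absurd (hAk _ h) hn
        · exact h
      · rintro ⟨b, hb, rfl⟩
        have h3 := hBk _ hb
        exact ⟨Or.inr ⟨b, hb, rfl⟩, fun h => by omega⟩
    have h3 : ((p.1 ∪ p.2.image (fun b => b + k)) \ Finset.Icc 1 k).image (fun a => a - k)
        = p.2 := by
      rw [h2, Finset.image_image]
      have he : ∀ b ∈ p.2, ((fun a => a - k) ∘ (fun b => b + k)) b = id b := fun b _ => by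
        simp only [Function.comp_apply, id]
        omega
      rw [Finset.image_congr he, Finset.image_id]
    exact Prod.ext h1 h3
  · intro S hS
    simp only [Finset.mem_filter, Finset.mem_powersetCard] at hS
    obtain ⟨⟨hsub, hcard⟩, hfil⟩ := hS
    set D := S \ Finset.Icc 1 k with hD
    have hDk : ∀ a ∈ D, k < a ∧ a ≤ n + m := by
      intro a ha
      rw [hD, Finset.mem_sdiff, Finset.mem_Icc] at ha
      have h2 := hsub ha.1
      rw [Finset.mem_Icc] at h2
      omega
    have hinj : Set.InjOn (fun a => a - k) D := by
      intro a ha b hb hab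
      have h1 := hDk a ha; have h2 := hDk b hb
      simp only at hab
      omega
    have hcardD : D.card = n - x := by
      have h3 := Finset.card_sdiff_add_card_inter S (Finset.Icc 1 k)
      rw [← hD] at h3
      omega
    have hsumB : ∑ b ∈ D.image (fun a => a - k), b + k * (n - x) = ∑ a ∈ D, a := by
      rw [Finset.sum_image hinj]
      have hc : k * (n - x) = ∑ _a ∈ D, k := by
        rw [Finset.sum_const, hcardD, smul_eq_mul, mul_comm]
      rw [hc, ← Finset.sum_add_distrib]
      exact Finset.sum_congr rfl fun a ha => by have := hDk a ha; omega
    have hsumS : ∑ a ∈ S ∩ Finset.Icc 1 k, a + ∑ a ∈ D, a = ∑ a ∈ S, a :=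
      Finset.sum_inter_add_sum_sdiff S (Finset.Icc 1 k) _
    show q ^ (2 * ∑ a ∈ S, a) = q ^ (2 * k * (n - x) + 2 * ∑ a ∈ S ∩ Finset.Icc 1 k, a
      + 2 * ∑ b ∈ D.image (fun a => a - k), b)
    congr 1
    have hkk : 2 * k * (n - x) = 2 * (k * (n - x)) := by ring
    rw [hkk]
    omega
end

section
/- In the weighted path model on monotone paths from (0,0) to (n,m), for a site x with n ≤ x ≤ n+m and x ≥ m, the probability that the x-th step of the path is horizontal (i.e., the spin at site x is down) is at most q^{2(x-n)}·(1-q^{2n})/(1-q^{2(n+m)}). -/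
open Finset

lemma Icc_ins (N : ℕ) : Icc 1 (N+1) = insert (N+1) (Icc 1 N) := by
  ext a; simp only [Finset.mem_Icc, Finset.mem_insert]; omega

lemma Icc_ins1 (N : ℕ) : Icc 1 (N+1) = insert 1 (Icc 2 (N+1)) := by
  ext a; simp only [Finset.mem_Icc, Finset.mem_insert]; omega

lemma split_sum (q : ℝ) (t : Finset ℕ) (y n : ℕ) (hy : y ∉ t) :
    ∑ S ∈ (insert y t).powersetCard (n+1), q ^ (2 * ∑ a ∈ S, a)
    = (∑ S ∈ t.powersetCard (n+1), q ^ (2 * ∑ a ∈ S, a))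
      + q^(2*y) * ∑ S ∈ t.powersetCard n, q ^ (2 * ∑ a ∈ S, a) := by
  rw [Finset.powersetCard_succ_insert hy, Finset.sum_union, Finset.sum_image]
  · congr 1
    rw [Finset.mul_sum]
    refine Finset.sum_congr rfl fun S hS => ?_
    have hyS : y ∉ S := fun h => hy ((Finset.mem_powersetCard.1 hS).1 h)
    rw [Finset.sum_insert hyS, Nat.mul_add, pow_add]
  · intro S hS T hT h
    have hyS : y ∉ S := fun h => hy ((Finset.mem_powersetCard.1 hS).1 h)
    have hyT : y ∉ T := fun h => hy ((Finset.mem_powersetCard.1 hT).1 h)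
    rw [← Finset.erase_insert hyS, ← Finset.erase_insert hyT, h]
  · rw [Finset.disjoint_left]
    intro S hS hS'
    have hyS : y ∉ S := fun h => hy ((Finset.mem_powersetCard.1 hS).1 h)
    obtain ⟨U, hU, rfl⟩ := Finset.mem_image.1 hS'
    exact hyS (Finset.mem_insert_self _ _)

lemma shift_sum (q : ℝ) (k N : ℕ) :
    ∑ S ∈ (Icc 2 (N+1)).powersetCard k, q ^ (2 * ∑ a ∈ S, a)
    = q^(2*k) * ∑ T ∈ (Icc 1 N).powersetCard k, q ^ (2 * ∑ a ∈ T, a) := by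
  rw [Finset.mul_sum]
  refine Finset.sum_nbij' (i := fun S => S.image (· - 1)) (j := fun T => T.image (· + 1))
    ?_ ?_ ?_ ?_ ?_
  · intro S hS
    obtain ⟨hSs, hSc⟩ := Finset.mem_powersetCard.1 hS
    have h2 : ∀ a ∈ S, 2 ≤ a ∧ a ≤ N+1 := fun a ha => Finset.mem_Icc.1 (hSs ha)
    refine Finset.mem_powersetCard.2 ⟨?_, ?_⟩
    · intro b hb
      obtain ⟨a, ha, rfl⟩ := Finset.mem_image.1 hb
      have := h2 a ha
      simp only [Finset.mem_Icc]; omega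
    · rw [Finset.card_image_of_injOn, hSc]
      intro a ha b hb hab
      have := h2 a ha; have := h2 b hb; simp only at hab; omega
  · intro T hT
    obtain ⟨hTs, hTc⟩ := Finset.mem_powersetCard.1 hT
    have h2 : ∀ a ∈ T, 1 ≤ a ∧ a ≤ N := fun a ha => Finset.mem_Icc.1 (hTs ha)
    refine Finset.mem_powersetCard.2 ⟨?_, ?_⟩
    · intro b hb
      obtain ⟨a, ha, rfl⟩ := Finset.mem_image.1 hb
      have := h2 a ha
      simp only [Finset.mem_Icc]; omega
    · rw [Finset.card_image_of_injOn, hTc]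
      intro a _ b _ hab; simp only at hab; omega
  · intro S hS
    obtain ⟨hSs, _⟩ := Finset.mem_powersetCard.1 hS
    rw [Finset.image_image]
    refine Eq.trans (Finset.image_congr fun a ha => ?_) Finset.image_id
    have := Finset.mem_Icc.1 (hSs ha)
    simp only [Function.comp_apply, id_eq]; omega
  · intro T hT
    rw [Finset.image_image]
    exact Eq.trans (Finset.image_congr fun a ha => by simp) Finset.image_id
  · intro S hS
    obtain ⟨hSs, hSc⟩ := Finset.mem_powersetCard.1 hS
    have h2 : ∀ a ∈ S, 2 ≤ a := fun a ha => (Finset.mem_Icc.1 (hSs ha)).1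
    rw [Finset.sum_image (f := fun b => b) (g := fun a => a - 1)
      (fun a ha b hb hab => by have := h2 a ha; have := h2 b hb; simp only at hab; omega)]
    have hsum : ∑ a ∈ S, a = (∑ a ∈ S, (a - 1)) + k := by
      calc ∑ a ∈ S, a = ∑ a ∈ S, ((a - 1) + 1) :=
            Finset.sum_congr rfl (fun a ha => by have := h2 a ha; omega)
        _ = (∑ a ∈ S, (a - 1)) + ∑ _a ∈ S, 1 := Finset.sum_add_distrib
        _ = (∑ a ∈ S, (a - 1)) + k := by
            rw [Finset.sum_const, smul_eq_mul, mul_one, hSc]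
    rw [hsum, Nat.mul_add, pow_add]
    ring

lemma Z_pos (q : ℝ) (hq0 : 0 < q) (n m : ℕ) : 0 < Z q n m := by
  refine Finset.sum_pos (fun S _ => pow_pos hq0 _) ?_
  refine Finset.powersetCard_nonempty.2 ?_
  rw [Nat.card_Icc]; omega

lemma lemA (q : ℝ) (n m : ℕ) :
    Z q (n+1) (m+1) = Z q (n+1) m + q^(2*((n+1)+(m+1))) * Z q n (m+1) := by
  unfold Z
  have h1 : n + 1 + (m + 1) = (n + m + 1) + 1 := by omega
  have h2 : n + 1 + m = n + m + 1 := by omega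
  have h3 : n + (m + 1) = n + m + 1 := by omega
  rw [h1, h2, h3, Icc_ins (n+m+1), split_sum q _ _ n (by simp)]

lemma lemB (q : ℝ) (n m : ℕ) :
    Z q (n+1) (m+1) = q^(2*(n+1)) * (Z q n (m+1) + Z q (n+1) m) := by
  unfold Z
  have h1 : n + 1 + (m + 1) = (n + m + 1) + 1 := by omega
  have h2 : n + 1 + m = n + m + 1 := by omega
  have h3 : n + (m + 1) = n + m + 1 := by omega
  rw [h1, h2, h3, Icc_ins1 (n+m+1), split_sum q _ _ n (by simp),
    shift_sum q (n+1) (n+m+1), shift_sum q n (n+m+1)]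
  ring

lemma Z_zero (q : ℝ) (k : ℕ) : Z q k 0 = q ^ (2 * ∑ a ∈ Icc 1 k, a) := by
  unfold Z
  have h2 : (Icc 1 k).powersetCard k = {Icc 1 k} := by
    have := Finset.powersetCard_self (Icc 1 k)
    rwa [Nat.card_Icc, show k + 1 - 1 = k from rfl] at this
  rw [Nat.add_zero, h2, Finset.sum_singleton]

lemma key (q : ℝ) (n m : ℕ) :
    (1 - q^(2*(n+1))) * Z q (n+1) m = q^(2*(n+1)) * (1 - q^(2*(n+1+m))) * Z q n m := by
  cases m with
  | zero =>
    rw [Z_zero, Z_zero, Icc_ins n, Finset.sum_insert (by simp)]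
    rw [Nat.add_zero, Nat.mul_add, pow_add]
    ring
  | succ m =>
    have hA := lemA q n m
    have hB := lemB q n m
    linear_combination hB - q^(2*(n+1)) * hA

lemma num_le (q : ℝ) (hq0 : 0 < q) (hq1 : q ≤ 1) (n m x : ℕ)
    (hn : n + 1 ≤ x) (hx : x ≤ n + 1 + m) :
    ∑ S ∈ ((Finset.Icc 1 (n+1+m)).powersetCard (n+1)).filter (fun S => x ∈ S),
      q ^ (2 * ∑ a ∈ S, a)
    ≤ q ^ (2*x) * Z q n m := by
  classical
  set v : ℕ → ℕ := fun a => if a < x then a else a - 1 with hv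
  set T : Finset ℕ → Finset ℕ := fun S => (S.erase x).image v with hT
  set A := ((Finset.Icc 1 (n+1+m)).powersetCard (n+1)).filter (fun S => x ∈ S) with hA
  -- basic facts about S ∈ A
  have hfacts : ∀ S ∈ A, x ∈ S ∧ S.card = n+1 ∧ ∀ a ∈ S, 1 ≤ a ∧ a ≤ n+1+m := by
    intro S hS
    obtain ⟨hS1, hS2⟩ := Finset.mem_filter.1 hS
    obtain ⟨hSs, hSc⟩ := Finset.mem_powersetCard.1 hS1
    exact ⟨hS2, hSc, fun a ha => Finset.mem_Icc.1 (hSs ha)⟩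
  have hvinj : ∀ S ∈ A, ∀ a ∈ S.erase x, ∀ b ∈ S.erase x, v a = v b → a = b := by
    intro S hS a ha b hb hab
    obtain ⟨hax, haS⟩ := Finset.mem_erase.1 ha
    obtain ⟨hbx, hbS⟩ := Finset.mem_erase.1 hb
    have h1 := (hfacts S hS).2.2 a haS
    have h2 := (hfacts S hS).2.2 b hbS
    simp only [hv] at hab
    split_ifs at hab <;> omega
  have hTmem : ∀ S ∈ A, T S ∈ (Finset.Icc 1 (n+m)).powersetCard n := by
    intro S hS
    refine Finset.mem_powersetCard.2 ⟨?_, ?_⟩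
    · intro b hb
      obtain ⟨a, ha, rfl⟩ := Finset.mem_image.1 hb
      obtain ⟨hax, haS⟩ := Finset.mem_erase.1 ha
      have h1 := (hfacts S hS).2.2 a haS
      simp only [Finset.mem_Icc, hv]
      split_ifs <;> omega
    · rw [Finset.card_image_of_injOn (fun a ha b hb => hvinj S hS a ha b hb),
        Finset.card_erase_of_mem (hfacts S hS).1, (hfacts S hS).2.1]
      omega
  have hTsum : ∀ S ∈ A, 2 * x + 2 * ∑ b ∈ T S, b ≤ 2 * ∑ a ∈ S, a := by
    intro S hS
    have h1 : ∑ b ∈ T S, b = ∑ a ∈ S.erase x, v a :=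
      Finset.sum_image (fun a ha b hb => hvinj S hS a ha b hb)
    have h2 : ∑ a ∈ S.erase x, v a ≤ ∑ a ∈ S.erase x, a :=
      Finset.sum_le_sum (fun a _ => by simp only [hv]; split_ifs <;> omega)
    have h3 : x + ∑ a ∈ S.erase x, a = ∑ a ∈ S, a :=
      Finset.add_sum_erase _ (fun a => a) (hfacts S hS).1
    omega
  have hTinj : Set.InjOn T ↑A := by
    have hrec : ∀ S ∈ A, insert x ((T S).image (fun b => if b < x then b else b + 1)) = S := by
      intro S hS
      rw [hT]
      dsimp only
      rw [Finset.image_image]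
      have : (S.erase x).image ((fun b => if b < x then b else b + 1) ∘ v) = S.erase x := by
        refine Eq.trans (Finset.image_congr fun a ha => ?_) Finset.image_id
        obtain ⟨hax, haS⟩ := Finset.mem_erase.1 ha
        have h1 := (hfacts S hS).2.2 a haS
        simp only [Function.comp_apply, hv, id_eq]
        split_ifs <;> omega
      rw [this, Finset.insert_erase (hfacts S hS).1]
    intro S1 h1 S2 h2 h
    simp only [Finset.mem_coe] at h1 h2
    rw [← hrec S1 h1, ← hrec S2 h2, h]
  calc ∑ S ∈ A, q ^ (2 * ∑ a ∈ S, a)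
      ≤ ∑ S ∈ A, q ^ (2*x) * q ^ (2 * ∑ b ∈ T S, b) := by
        refine Finset.sum_le_sum fun S hS => ?_
        rw [← pow_add]
        exact pow_le_pow_of_le_one hq0.le hq1 (hTsum S hS)
    _ = q ^ (2*x) * ∑ S ∈ A, q ^ (2 * ∑ b ∈ T S, b) := by rw [Finset.mul_sum]
    _ = q ^ (2*x) * ∑ U ∈ A.image T, q ^ (2 * ∑ b ∈ U, b) := by
        rw [Finset.sum_image (fun a ha b hb h => hTinj ha hb h)]
    _ ≤ q ^ (2*x) * Z q n m := by
        refine mul_le_mul_of_nonneg_left ?_ (pow_nonneg hq0.le _)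
        refine Finset.sum_le_sum_of_subset_of_nonneg ?_ (fun _ _ _ => pow_nonneg hq0.le _)
        intro U hU
        obtain ⟨S, hS, rfl⟩ := Finset.mem_image.1 hU
        exact hTmem S hS

/-- The probability that the `x`-th step is horizontal (spin down at site `x`)
is at most `q^{2(x-n)} (1-q^{2n})/(1-q^{2(n+m)})`. -/
theorem stmt13 (q : ℝ) (hq0 : 0 < q) (hq1 : q < 1) (n m x : ℕ)
    (hn : n ≤ x) (hm : m ≤ x) (hx : x ≤ n + m) :
    (∑ S ∈ ((Finset.Icc 1 (n + m)).powersetCard n).filter (fun S => x ∈ S),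
      q ^ (2 * ∑ a ∈ S, a)) / Z q n m
    ≤ q ^ (2 * (x - n)) * (1 - q ^ (2 * n)) / (1 - q ^ (2 * (n + m))) := by
  cases n with
  | zero =>
    have h : ((Finset.Icc 1 (0 + m)).powersetCard 0).filter (fun S => x ∈ S) = ∅ := by
      simp [Finset.filter_singleton]
    rw [h]
    simp
  | succ n' =>
    have hZ : 0 < Z q (n'+1) m := Z_pos q hq0 _ _
    have hW : 0 < Z q n' m := Z_pos q hq0 _ _
    have hden : 0 < 1 - q ^ (2*(n'+1+m)) := by
      have : q ^ (2*(n'+1+m)) < 1 := pow_lt_one₀ hq0.le hq1 (by omega)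
      linarith
    rw [div_le_div_iff₀ hZ hden]
    have hkey := key q n' m
    have hnum := num_le q hq0 hq1.le n' m x hn hx
    have hpow : q ^ (2*(x-(n'+1))) * q ^ (2*(n'+1)) = q ^ (2*x) := by
      rw [← pow_add]
      congr 1
      omega
    calc (∑ S ∈ ((Finset.Icc 1 (n'+1+m)).powersetCard (n'+1)).filter (fun S => x ∈ S),
          q ^ (2 * ∑ a ∈ S, a)) * (1 - q ^ (2*(n'+1+m)))
        ≤ (q ^ (2*x) * Z q n' m) * (1 - q ^ (2*(n'+1+m))) :=
          mul_le_mul_of_nonneg_right hnum hden.le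
      _ = q ^ (2*(x-(n'+1))) * (1 - q ^ (2*(n'+1))) * Z q (n'+1) m := by
          linear_combination (-(q^(2*(x-(n'+1))))) * hkey
            - ((1 - q^(2*(n'+1+m))) * Z q n' m) * hpow
end

section
/- In the weighted path model on monotone paths from (0,0) to (n,m), for n ≤ x < n+m with x ≥ m, the probability that step x is horizontal and step x+1 is vertical is at most q^{2(x-n)} · (1-q^{2m})/(1-q^{2n}) · (1-q^{2L})/(1-q^{2(L-1)}), where L = n+m. -/
open Finset

noncomputable def ZZ (q : ℝ) (k l : ℕ) : ℝ :=
  ∑ S ∈ (Finset.Icc 1 l).powersetCard k, q ^ (2 * ∑ a ∈ S, a)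

lemma Z_eq_ZZ (q : ℝ) (n m : ℕ) : Z q n m = ZZ q n (n + m) := rfl

lemma Icc_succ (l : ℕ) : Finset.Icc 1 (l+1) = insert (l+1) (Finset.Icc 1 l) := by
  ext i; simp [Finset.mem_Icc, Finset.mem_insert]; omega

lemma ZZ_zero (q : ℝ) (l : ℕ) : ZZ q 0 l = 1 := by
  simp [ZZ]

lemma gauss_Icc (n : ℕ) : (∑ i ∈ Finset.Icc 1 n, i) * 2 = n * (n+1) := by
  have h1 : Finset.range (n+1) = insert 0 (Finset.Icc 1 n) := by
    ext i; simp [Finset.mem_range, Finset.mem_Icc]; omega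
  have h2 := Finset.sum_range_id_mul_two (n+1)
  rw [h1, Finset.sum_insert (by simp)] at h2
  rw [show n*(n+1) = (n+1)*n from by ring]
  simpa using h2

lemma ZZ_self (q : ℝ) (n : ℕ) : ZZ q n n = q ^ (n * (n+1)) := by
  have hc : (Finset.Icc 1 n).card = n := by rw [Nat.card_Icc]; omega
  have h := Finset.powersetCard_self (Finset.Icc 1 n)
  rw [hc] at h
  rw [ZZ, h, Finset.sum_singleton]
  congr 1
  have := gauss_Icc n
  omega

lemma ZZ_rec (q : ℝ) (k l : ℕ) :
    ZZ q (k+1) (l+1) = ZZ q (k+1) l + q ^ (2*(l+1)) * ZZ q k l := by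
  have hnotmem : (l+1) ∉ Finset.Icc 1 l := by simp
  have hmem : ∀ S ∈ (Finset.Icc 1 l).powersetCard k, (l+1) ∉ S := by
    intro S hS h
    rw [Finset.mem_powersetCard] at hS
    have := hS.1 h
    rw [Finset.mem_Icc] at this
    omega
  have hinj : ∀ S ∈ (Finset.Icc 1 l).powersetCard k,
      ∀ T ∈ (Finset.Icc 1 l).powersetCard k, insert (l+1) S = insert (l+1) T → S = T := by
    intro S hS T hT hST
    have := congrArg (fun s => Finset.erase s (l+1)) hST
    simpa [Finset.erase_insert (hmem S hS), Finset.erase_insert (hmem T hT)] using this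
  have hdisj : Disjoint ((Finset.Icc 1 l).powersetCard (k+1))
      (((Finset.Icc 1 l).powersetCard k).image (insert (l+1))) := by
    rw [Finset.disjoint_left]
    intro S hS hS'
    rw [Finset.mem_powersetCard] at hS
    rw [Finset.mem_image] at hS'
    obtain ⟨T, _, rfl⟩ := hS'
    have := hS.1 (Finset.mem_insert_self (l+1) T)
    rw [Finset.mem_Icc] at this
    omega
  simp only [ZZ]
  rw [Icc_succ, Finset.powersetCard_succ_insert hnotmem, Finset.sum_union hdisj,
    Finset.sum_image hinj]
  congr 1
  rw [Finset.mul_sum]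
  apply Finset.sum_congr rfl
  intro S hS
  rw [Finset.sum_insert (hmem S hS), ← pow_add]
  congr 1
  ring

noncomputable def DD (q : ℝ) (n : ℕ) : ℝ := ∏ i ∈ Finset.range n, (1 - q ^ (2*(i+1)))
noncomputable def Pr (q : ℝ) (n m : ℕ) : ℝ := ∏ i ∈ Finset.range n, (1 - q ^ (2*(m+i+1)))

lemma Pr_zero_eq_DD (q : ℝ) (n : ℕ) : Pr q n 0 = DD q n := by
  unfold Pr DD; apply Finset.prod_congr rfl; intro i _; norm_num

lemma Zform (q : ℝ) : ∀ l n m : ℕ, n + m = l →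
    ZZ q n (n+m) * DD q n = q ^ (n*(n+1)) * Pr q n m := by
  intro l
  induction l with
  | zero => intro n m h
            obtain ⟨rfl, rfl⟩ : n = 0 ∧ m = 0 := by omega
            simp [ZZ_zero, DD, Pr]
  | succ L ih =>
    intro n m h
    match n, m with
    | 0, m => simp [ZZ_zero, DD, Pr]
    | (n+1), 0 => rw [Pr_zero_eq_DD, Nat.add_zero, ZZ_self]
    | (n+1), (m+1) =>
      have e1 : (n+1) + (m+1) = (n + m + 1) + 1 := by omega
      rw [e1, ZZ_rec]
      have ih1 : ZZ q (n+1) ((n+1)+m) * DD q (n+1) = q ^ ((n+1)*(n+2)) * Pr q (n+1) m := by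
        have := ih (n+1) m (by omega)
        convert this using 3 <;> ring
      have ih2 : ZZ q n (n+(m+1)) * DD q n = q ^ (n*(n+1)) * Pr q n (m+1) :=
        ih n (m+1) (by omega)
      have e2 : (n+1) + m = n + m + 1 := by omega
      have e3 : n + (m+1) = n + m + 1 := by omega
      rw [e2] at ih1; rw [e3] at ih2
      have hD : DD q (n+1) = DD q n * (1 - q^(2*(n+1))) := Finset.prod_range_succ _ _
      have hP1 : Pr q (n+1) m = (1 - q^(2*(m+1))) * Pr q n (m+1) := by
        unfold Pr
        rw [Finset.prod_range_succ']
        have e : (∏ i ∈ Finset.range n, (1 - q^(2*(m+(i+1)+1))))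
            = ∏ i ∈ Finset.range n, (1 - q^(2*(m+1+i+1))) :=
          Finset.prod_congr rfl fun i _ => by
            rw [show 2*(m+(i+1)+1) = 2*(m+1+i+1) from by ring]
        rw [e, show 2*(m+0+1) = 2*(m+1) from by ring, mul_comm]
      have hP2 : Pr q (n+1) (m+1) = Pr q n (m+1) * (1 - q^(2*(n+m+2))) := by
        simp only [Pr, Finset.prod_range_succ]
        try ring
      linear_combination ih1 + q^((n+1)*(n+2)) * hP1 +
        (q^(2*(n+m+1+1)) * ZZ q n (n+m+1)) * hD +
        (q^(2*(n+m+1+1)) * (1 - q^(2*(n+1)))) * ih2 - q^((n+1)*((n+1)+1)) * hP2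

lemma one_sub_pow_pos {q : ℝ} (hq0 : 0 < q) (hq1 : q < 1) (k : ℕ) (hk : 1 ≤ k) :
    0 < 1 - q ^ k := by
  have : q ^ k < 1 := pow_lt_one₀ hq0.le hq1 (by omega)
  linarith

lemma DD_ne_zero {q : ℝ} (hq0 : 0 < q) (hq1 : q < 1) (n : ℕ) : DD q n ≠ 0 := by
  unfold DD
  apply Finset.prod_ne_zero_iff.2
  intro i _
  exact ne_of_gt (one_sub_pow_pos hq0 hq1 _ (by omega))

lemma Pr_shift (q : ℝ) (a b : ℕ) :
    (1 - q^(2*(b+1))) * Pr q (a+1) (b+1)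
      = (1 - q^(2*(a+b+2))) * (1 - q^(2*(a+b+1))) * Pr q a b := by
  induction a with
  | zero =>
    simp only [Pr, zero_add, Finset.prod_range_one, Finset.prod_range_zero]
    ring
  | succ a ih =>
    have hP1 : Pr q (a+1+1) (b+1) = Pr q (a+1) (b+1) * (1 - q^(2*(a+b+3))) := by
      simp only [Pr, Finset.prod_range_succ]
      ring
    have hP2 : Pr q (a+1) b = Pr q a b * (1 - q^(2*(a+b+1))) := by
      simp only [Pr, Finset.prod_range_succ]
      ring
    linear_combination (1-q^(2*(b+1)))*hP1 + (1-q^(2*(a+b+3)))*ih -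
      (1-q^(2*(a+1+b+2)))*(1-q^(2*(a+1+b+1)))*hP2

lemma Zident {q : ℝ} (hq0 : 0 < q) (hq1 : q < 1) (a b : ℕ) :
    (1 - q^(2*(a+1))) * (1 - q^(2*(b+1))) * ZZ q (a+1) (a+b+2)
      = q^(2*(a+1)) * ((1 - q^(2*(a+b+2))) * (1 - q^(2*(a+b+1))) * ZZ q a (a+b)) := by
  have h1 : ZZ q (a+1) (a+b+2) * DD q (a+1) = q ^ ((a+1)*(a+2)) * Pr q (a+1) (b+1) := by
    have := Zform q ((a+1)+(b+1)) (a+1) (b+1) rfl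
    convert this using 3 <;> ring
  have h2 : ZZ q a (a+b) * DD q a = q ^ (a*(a+1)) * Pr q a b := Zform q (a+b) a b rfl
  have hD : DD q (a+1) = DD q a * (1 - q^(2*(a+1))) := Finset.prod_range_succ _ _
  have hPs := Pr_shift q a b
  apply mul_right_cancel₀ (DD_ne_zero hq0 hq1 (a+1))
  calc (1 - q^(2*(a+1))) * (1 - q^(2*(b+1))) * ZZ q (a+1) (a+b+2) * DD q (a+1)
      = (1 - q^(2*(a+1))) * ((1 - q^(2*(b+1))) * (ZZ q (a+1) (a+b+2) * DD q (a+1))) := by ring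
    _ = (1 - q^(2*(a+1))) * ((1 - q^(2*(b+1))) * (q ^ ((a+1)*(a+2)) * Pr q (a+1) (b+1))) := by
        rw [h1]
    _ = (1 - q^(2*(a+1))) * q ^ ((a+1)*(a+2)) *
          ((1 - q^(2*(b+1))) * Pr q (a+1) (b+1)) := by ring
    _ = (1 - q^(2*(a+1))) * q ^ ((a+1)*(a+2)) *
          ((1 - q^(2*(a+b+2))) * (1 - q^(2*(a+b+1))) * Pr q a b) := by rw [hPs]
    _ = (1 - q^(2*(a+1))) * q^(2*(a+1)) * ((1 - q^(2*(a+b+2))) * (1 - q^(2*(a+b+1)))) *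
          (q ^ (a*(a+1)) * Pr q a b) := by ring
    _ = (1 - q^(2*(a+1))) * q^(2*(a+1)) * ((1 - q^(2*(a+b+2))) * (1 - q^(2*(a+b+1)))) *
          (ZZ q a (a+b) * DD q a) := by rw [h2]
    _ = q^(2*(a+1)) * ((1 - q^(2*(a+b+2))) * (1 - q^(2*(a+b+1))) * ZZ q a (a+b)) *
          DD q (a+1) := by rw [hD]; ring

noncomputable def NN (q : ℝ) (l k x : ℕ) : ℝ :=
  ∑ S ∈ ((Finset.Icc 1 l).powersetCard k).filter (fun S => x ∈ S ∧ x + 1 ∉ S),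
    q ^ (2 * ∑ a ∈ S, a)

def cmove (x : ℕ) (S : Finset ℕ) : Finset ℕ :=
  if x+2 ∈ S then insert (x+1) (S.erase (x+2)) else insert (x+1) (S.erase x)

lemma NN_nonneg {q : ℝ} (hq0 : 0 < q) (l k x : ℕ) : 0 ≤ NN q l k x :=
  Finset.sum_nonneg fun S _ => pow_nonneg hq0.le _

lemma move {q : ℝ} (hq0 : 0 < q) (hq1 : q < 1) (l k x : ℕ) (hxl : x + 1 ≤ l) :
    q^2 * NN q l k x ≤ NN q l k (x+1) := by
  classical
  set Fx := ((Finset.Icc 1 l).powersetCard k).filter (fun S => x ∈ S ∧ x + 1 ∉ S) with hFx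
  set Fy := ((Finset.Icc 1 l).powersetCard k).filter (fun S => x+1 ∈ S ∧ x + 1 + 1 ∉ S) with hFy
  have hmain : ∀ S ∈ Fx, cmove x S ∈ Fy ∧
      2 * ∑ a ∈ cmove x S, a ≤ 2 * ∑ a ∈ S, a + 2 := by
    intro S hS
    rw [hFx, Finset.mem_filter, Finset.mem_powersetCard] at hS
    obtain ⟨⟨hsub, hcard⟩, hxS, hx1S⟩ := hS
    have hcard1 : 1 ≤ S.card := Finset.card_pos.2 ⟨x, hxS⟩
    have hx1Icc : x + 1 ∈ Finset.Icc 1 l := by rw [Finset.mem_Icc]; omega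
    by_cases h2 : x + 2 ∈ S
    · rw [cmove, if_pos h2]
      have hne : x + 1 ∉ S.erase (x+2) := fun h => hx1S (Finset.mem_of_mem_erase h)
      have hs : (∑ a ∈ S.erase (x+2), a) + (x+2) = ∑ a ∈ S, a :=
        Finset.sum_erase_add S (fun a => a) h2
      have hi : ∑ a ∈ insert (x+1) (S.erase (x+2)), a = (x+1) + ∑ a ∈ S.erase (x+2), a :=
        Finset.sum_insert hne
      constructor
      · rw [hFy, Finset.mem_filter, Finset.mem_powersetCard]
        refine ⟨⟨Finset.insert_subset hx1Icc ((Finset.erase_subset _ _).trans hsub), ?_⟩,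
          Finset.mem_insert_self _ _, ?_⟩
        · rw [Finset.card_insert_of_notMem hne, Finset.card_erase_of_mem h2]
          omega
        · intro h
          rcases Finset.mem_insert.1 h with h | h
          · omega
          · exact absurd (Finset.mem_of_mem_erase h) (by
              intro _; exact (Finset.notMem_erase _ _) h)
      · rw [hi]
        omega
    · rw [cmove, if_neg h2]
      have hne : x + 1 ∉ S.erase x := fun h => hx1S (Finset.mem_of_mem_erase h)
      have hs : (∑ a ∈ S.erase x, a) + x = ∑ a ∈ S, a :=
        Finset.sum_erase_add S (fun a => a) hxS
      have hi : ∑ a ∈ insert (x+1) (S.erase x), a = (x+1) + ∑ a ∈ S.erase x, a :=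
        Finset.sum_insert hne
      constructor
      · rw [hFy, Finset.mem_filter, Finset.mem_powersetCard]
        refine ⟨⟨Finset.insert_subset hx1Icc ((Finset.erase_subset _ _).trans hsub), ?_⟩,
          Finset.mem_insert_self _ _, ?_⟩
        · rw [Finset.card_insert_of_notMem hne, Finset.card_erase_of_mem hxS]
          omega
        · intro h
          rcases Finset.mem_insert.1 h with h | h
          · omega
          · exact h2 (Finset.mem_of_mem_erase h)
      · rw [hi]
        omega
  have hmemiff : ∀ S ∈ Fx, (x ∈ cmove x S ↔ x + 2 ∈ S) := by
    intro S hS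
    rw [hFx, Finset.mem_filter] at hS
    obtain ⟨_, hxS, hx1S⟩ := hS
    constructor
    · intro h
      by_contra h2
      rw [cmove, if_neg h2] at h
      rcases Finset.mem_insert.1 h with h | h
      · omega
      · exact absurd (Finset.mem_erase.1 h).1 (by simp)
    · intro h2
      rw [cmove, if_pos h2]
      exact Finset.mem_insert_of_mem (Finset.mem_erase.2 ⟨by omega, hxS⟩)
  have hinj : ∀ S ∈ Fx, ∀ T ∈ Fx, cmove x S = cmove x T → S = T := by
    intro S hS T hT hST
    have hSf := hS; have hTf := hT
    rw [hFx, Finset.mem_filter] at hSf hTf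
    obtain ⟨_, hxS, hx1S⟩ := hSf
    obtain ⟨_, hxT, hx1T⟩ := hTf
    by_cases h2S : x + 2 ∈ S
    · have h2T : x + 2 ∈ T := by
        rw [← hmemiff T hT, ← hST, hmemiff S hS]; exact h2S
      rw [cmove, if_pos h2S, cmove, if_pos h2T] at hST
      have hneS : x + 1 ∉ S.erase (x+2) := fun h => hx1S (Finset.mem_of_mem_erase h)
      have hneT : x + 1 ∉ T.erase (x+2) := fun h => hx1T (Finset.mem_of_mem_erase h)
      have := congrArg (fun s => Finset.erase s (x+1)) hST
      simp only [Finset.erase_insert hneS, Finset.erase_insert hneT] at this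
      calc S = insert (x+2) (S.erase (x+2)) := (Finset.insert_erase h2S).symm
        _ = insert (x+2) (T.erase (x+2)) := by rw [this]
        _ = T := Finset.insert_erase h2T
    · have h2T : x + 2 ∉ T := by
        rw [← hmemiff T hT, ← hST, hmemiff S hS]; exact h2S
      rw [cmove, if_neg h2S, cmove, if_neg h2T] at hST
      have hneS : x + 1 ∉ S.erase x := fun h => hx1S (Finset.mem_of_mem_erase h)
      have hneT : x + 1 ∉ T.erase x := fun h => hx1T (Finset.mem_of_mem_erase h)
      have := congrArg (fun s => Finset.erase s (x+1)) hST
      simp only [Finset.erase_insert hneS, Finset.erase_insert hneT] at this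
      calc S = insert x (S.erase x) := (Finset.insert_erase hxS).symm
        _ = insert x (T.erase x) := by rw [this]
        _ = T := Finset.insert_erase hxT
  calc q^2 * NN q l k x = ∑ S ∈ Fx, q^2 * q ^ (2 * ∑ a ∈ S, a) := by
        rw [NN, Finset.mul_sum]
    _ ≤ ∑ S ∈ Fx, q ^ (2 * ∑ a ∈ cmove x S, a) := by
        apply Finset.sum_le_sum
        intro S hS
        rw [mul_comm, ← pow_add]
        exact pow_le_pow_of_le_one hq0.le hq1.le (by have := (hmain S hS).2; omega)
    _ = ∑ T ∈ Fx.image (cmove x), q ^ (2 * ∑ a ∈ T, a) := (Finset.sum_image (f := fun T => q ^ (2 * ∑ a ∈ T, a)) hinj).symm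
    _ ≤ ∑ T ∈ Fy, q ^ (2 * ∑ a ∈ T, a) := by
        apply Finset.sum_le_sum_of_subset_of_nonneg
        · intro T hT
          rw [Finset.mem_image] at hT
          obtain ⟨S, hS, rfl⟩ := hT
          exact (hmain S hS).1
        · intro T _ _
          exact pow_nonneg hq0.le _
    _ = NN q l k (x+1) := rfl

lemma boundary (q : ℝ) (a b : ℕ) :
    NN q (a+b+2) (a+1) (a+b+1) = q^(2*(a+b+1)) * ZZ q a (a+b) := by
  classical
  rw [NN, ZZ, Finset.mul_sum]
  apply Finset.sum_nbij' (i := fun S => S.erase (a+b+1)) (j := fun T => insert (a+b+1) T)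
  · intro S hS
    rw [Finset.mem_filter, Finset.mem_powersetCard] at hS
    obtain ⟨⟨hsub, hcard⟩, hyS, hy1S⟩ := hS
    rw [Finset.mem_powersetCard]
    constructor
    · intro z hz
      have hzS := Finset.mem_of_mem_erase hz
      have hzne := (Finset.mem_erase.1 hz).1
      have := hsub hzS
      rw [Finset.mem_Icc] at this ⊢
      have hzne2 : z ≠ a+b+2 := fun h => hy1S (h ▸ hzS)
      omega
    · rw [Finset.card_erase_of_mem hyS]
      omega
  · intro T hT
    rw [Finset.mem_powersetCard] at hT
    obtain ⟨hsub, hcard⟩ := hT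
    have hyT : a+b+1 ∉ T := fun h => by
      have := hsub h; rw [Finset.mem_Icc] at this; omega
    rw [Finset.mem_filter, Finset.mem_powersetCard]
    refine ⟨⟨?_, ?_⟩, Finset.mem_insert_self _ _, ?_⟩
    · apply Finset.insert_subset
      · rw [Finset.mem_Icc]; omega
      · intro z hz
        have := hsub hz
        rw [Finset.mem_Icc] at this ⊢
        omega
    · rw [Finset.card_insert_of_notMem hyT]; omega
    · intro h
      rcases Finset.mem_insert.1 h with h | h
      · omega
      · have := hsub h; rw [Finset.mem_Icc] at this; omega
  · intro S hS
    rw [Finset.mem_filter] at hS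
    exact Finset.insert_erase hS.2.1
  · intro T hT
    rw [Finset.mem_powersetCard] at hT
    have hyT : a+b+1 ∉ T := fun h => by
      have := hT.1 h; rw [Finset.mem_Icc] at this; omega
    exact Finset.erase_insert hyT
  · intro S hS
    rw [Finset.mem_filter] at hS
    have hs : (∑ a ∈ S.erase (a+b+1), a) + (a+b+1) = ∑ a ∈ S, a :=
      Finset.sum_erase_add S (fun a => a) hS.2.1
    rw [← pow_add]
    congr 1
    omega

lemma chain {q : ℝ} (hq0 : 0 < q) (hq1 : q < 1) (l k : ℕ) :
    ∀ j y, y + j + 1 ≤ l → q^(2*j) * NN q l k y ≤ NN q l k (y+j) := by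
  intro j
  induction j with
  | zero => intro y h; simp
  | succ j ih =>
    intro y h
    have step := move hq0 hq1 l k y (by omega)
    calc q^(2*(j+1)) * NN q l k y = q^(2*j) * (q^2 * NN q l k y) := by ring
      _ ≤ q^(2*j) * NN q l k (y+1) :=
          mul_le_mul_of_nonneg_left step (pow_nonneg hq0.le _)
      _ ≤ NN q l k (y+1+j) := ih (y+1) (by omega)
      _ = NN q l k (y+(j+1)) := by rw [show y+1+j = y+(j+1) from by omega]

lemma ZZ_pos {q : ℝ} (hq0 : 0 < q) (k l : ℕ) (hkl : k ≤ l) : 0 < ZZ q k l := by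
  apply Finset.sum_pos (fun S _ => pow_pos hq0 _)
  rw [Finset.powersetCard_nonempty, Nat.card_Icc]
  omega

lemma ZZ_nonneg {q : ℝ} (hq0 : 0 < q) (k l : ℕ) : 0 ≤ ZZ q k l :=
  Finset.sum_nonneg fun S _ => pow_nonneg hq0.le _

/-- The probability that step `x` is horizontal (spin down) and step `x+1`
is vertical (spin up) is at most
`q^{2(x-n)} (1-q^{2m})/(1-q^{2n}) · (1-q^{2L})/(1-q^{2(L-1)})`, `L = n+m`. -/
theorem stmt15 (q : ℝ) (hq0 : 0 < q) (hq1 : q < 1) (n m x : ℕ)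
    (hn : n ≤ x) (hm : m ≤ x) (hx : x < n + m) :
    (∑ S ∈ ((Finset.Icc 1 (n + m)).powersetCard n).filter
        (fun S => x ∈ S ∧ x + 1 ∉ S),
      q ^ (2 * ∑ a ∈ S, a)) / Z q n m
    ≤ q ^ (2 * (x - n)) * ((1 - q ^ (2 * m)) / (1 - q ^ (2 * n))) *
        ((1 - q ^ (2 * (n + m))) / (1 - q ^ (2 * (n + m - 1)))) := by
  obtain ⟨a, rfl⟩ : ∃ a, n = a + 1 := ⟨n - 1, by omega⟩
  obtain ⟨b, rfl⟩ : ∃ b, m = b + 1 := ⟨m - 1, by omega⟩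
  obtain ⟨d, rfl⟩ : ∃ d, x = a + 1 + d := ⟨x - (a + 1), by omega⟩
  have hdb : d ≤ b := by omega
  rw [show a + 1 + (b + 1) = a + b + 2 from by omega,
    show a + 1 + d - (a + 1) = d from by omega,
    show a + b + 2 - 1 = a + b + 1 from rfl]
  have hNlhs : (∑ S ∈ ((Finset.Icc 1 (a + b + 2)).powersetCard (a+1)).filter
      (fun S => a + 1 + d ∈ S ∧ a + 1 + d + 1 ∉ S),
      q ^ (2 * ∑ a ∈ S, a)) = NN q (a+b+2) (a+1) (a+1+d) := rfl
  rw [hNlhs]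
  -- abbreviations
  have hZeq : Z q (a+1) (b+1) = ZZ q (a+1) (a+b+2) := by
    rw [Z_eq_ZZ, show a + 1 + (b + 1) = a + b + 2 from by omega]
  have hZpos : 0 < Z q (a+1) (b+1) := by
    rw [hZeq]; exact ZZ_pos hq0 _ _ (by omega)
  have hZ'nn : 0 ≤ ZZ q a (a+b) := ZZ_nonneg hq0 _ _
  have h1A : 0 < 1 - q^(2*(a+1)) := one_sub_pow_pos hq0 hq1 _ (by omega)
  have h1B : 0 < 1 - q^(2*(b+1)) := one_sub_pow_pos hq0 hq1 _ (by omega)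
  have h1C : 0 < 1 - q^(2*(a+b+2)) := one_sub_pow_pos hq0 hq1 _ (by omega)
  have h1Cm : 0 < 1 - q^(2*(a+b+1)) := one_sub_pow_pos hq0 hq1 _ (by omega)
  have hAC : 1 - q^(2*(a+1)) ≤ 1 - q^(2*(a+b+2)) := by
    have : q^(2*(a+b+2)) ≤ q^(2*(a+1)) :=
      pow_le_pow_of_le_one hq0.le hq1.le (by omega)
    linarith
  -- N ≤ q^{2x} Z'
  have hNb : NN q (a+b+2) (a+1) (a+1+d) ≤ q^(2*(a+1+d)) * ZZ q a (a+b) := by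
    have hch := chain hq0 hq1 (a+b+2) (a+1) (b-d) (a+1+d) (by omega)
    rw [show a+1+d+(b-d) = a+b+1 from by omega, boundary] at hch
    have hpow : q^(2*(b-d)) * q^(2*(a+1+d)) = q^(2*(a+b+1)) := by
      rw [← pow_add]; congr 1; omega
    have hch2 : q^(2*(b-d)) * NN q (a+b+2) (a+1) (a+1+d)
        ≤ q^(2*(b-d)) * (q^(2*(a+1+d)) * ZZ q a (a+b)) := by
      rw [← mul_assoc, hpow]; exact hch
    exact le_of_mul_le_mul_left hch2 (pow_pos hq0 _)
  -- identity with Z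
  have hId : (1 - q^(2*(a+1))) * (1 - q^(2*(b+1))) * Z q (a+1) (b+1)
      = q^(2*(a+1)) * ((1 - q^(2*(a+b+2))) * (1 - q^(2*(a+b+1))) * ZZ q a (a+b)) := by
    rw [hZeq]; exact Zident hq0 hq1 a b
  -- rewrite RHS of goal as single fraction
  have hR : q^(2*d) * ((1 - q^(2*(b+1))) / (1 - q^(2*(a+1)))) *
        ((1 - q^(2*(a+b+2))) / (1 - q^(2*(a+b+1))))
      = (q^(2*d) * (1 - q^(2*(b+1))) * (1 - q^(2*(a+b+2)))) /
        ((1 - q^(2*(a+1))) * (1 - q^(2*(a+b+1)))) := by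
    field_simp
  rw [hR, div_le_div_iff₀ hZpos (by positivity)]
  -- final chain
  have hpow2 : q^(2*d) * q^(2*(a+1)) = q^(2*(a+1+d)) := by
    rw [← pow_add]; congr 1; omega
  have hkey : (1 - q^(2*(a+1))) * (NN q (a+b+2) (a+1) (a+1+d) *
        ((1 - q^(2*(a+1))) * (1 - q^(2*(a+b+1)))))
      ≤ (1 - q^(2*(a+1))) * ((q^(2*d) * (1 - q^(2*(b+1))) * (1 - q^(2*(a+b+2)))) *
        Z q (a+1) (b+1)) := by
    have e1 : (1 - q^(2*(a+1))) * ((q^(2*d) * (1 - q^(2*(b+1))) * (1 - q^(2*(a+b+2)))) *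
          Z q (a+1) (b+1))
        = q^(2*d) * (1 - q^(2*(a+b+2))) *
          ((1 - q^(2*(a+1))) * (1 - q^(2*(b+1))) * Z q (a+1) (b+1)) := by ring
    rw [e1, hId]
    have e2 : q^(2*d) * (1 - q^(2*(a+b+2))) *
          (q^(2*(a+1)) * ((1 - q^(2*(a+b+2))) * (1 - q^(2*(a+b+1))) * ZZ q a (a+b)))
        = (q^(2*d) * q^(2*(a+1))) *
          ((1 - q^(2*(a+b+2))) * (1 - q^(2*(a+b+2))) * ((1 - q^(2*(a+b+1))) * ZZ q a (a+b))) := by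
      ring
    rw [e2, hpow2]
    calc (1 - q^(2*(a+1))) * (NN q (a+b+2) (a+1) (a+1+d) *
          ((1 - q^(2*(a+1))) * (1 - q^(2*(a+b+1)))))
        = ((1 - q^(2*(a+1))) * (1 - q^(2*(a+1))) * (1 - q^(2*(a+b+1)))) *
          NN q (a+b+2) (a+1) (a+1+d) := by ring
      _ ≤ ((1 - q^(2*(a+1))) * (1 - q^(2*(a+1))) * (1 - q^(2*(a+b+1)))) *
          (q^(2*(a+1+d)) * ZZ q a (a+b)) := by
          apply mul_le_mul_of_nonneg_left hNb
          positivity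
      _ = q^(2*(a+1+d)) * ((1 - q^(2*(a+1))) * (1 - q^(2*(a+1))) *
          ((1 - q^(2*(a+b+1))) * ZZ q a (a+b))) := by ring
      _ ≤ q^(2*(a+1+d)) * ((1 - q^(2*(a+b+2))) * (1 - q^(2*(a+b+2))) *
          ((1 - q^(2*(a+b+1))) * ZZ q a (a+b))) := by
          apply mul_le_mul_of_nonneg_left _ (pow_nonneg hq0.le _)
          apply mul_le_mul_of_nonneg_right _ (mul_nonneg h1Cm.le hZ'nn)
          exact mul_le_mul hAC hAC h1A.le h1C.le
  exact le_of_mul_le_mul_left hkey h1A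
end

section
/- Exponential bound on multi-point correlations: In the weighted path model on monotone paths from (0,0) to (n,m) with probability of path α given by q^{2Σ_k k·α_k}/Z(n,m), fix positions x_1 < x_2 < ... < x_r in {1,...,n+m} with each x_k ≥ max(n,m), and prescribed values σ_1,...,σ_r ∈ {0,1}. Let v = Σ_k σ_k be the number of prescribed 'down spins' (horizontal steps) and d_k = (x_k - n)σ_k. Then Prob(α_{x_1}=σ_1, ..., α_{x_r}=σ_r) ≤ q^{v(v-1) + 2Σ_{k=1}^r d_k}. -/
open Finset

lemma sum_le_sum_inj {α β : Type*} [DecidableEq β] (s : Finset α) (t : Finset β)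
    (Φ : α → β) (hinj : Set.InjOn Φ s) (hmem : ∀ a ∈ s, Φ a ∈ t)
    (F : α → ℝ) (G : β → ℝ) (hle : ∀ a ∈ s, F a ≤ G (Φ a))
    (hG : ∀ b ∈ t, 0 ≤ G b) :
    ∑ a ∈ s, F a ≤ ∑ b ∈ t, G b := by
  calc ∑ a ∈ s, F a ≤ ∑ a ∈ s, G (Φ a) := Finset.sum_le_sum hle
    _ = ∑ b ∈ s.image Φ, G b := (Finset.sum_image fun a ha b hb h => hinj ha hb h).symm
    _ ≤ ∑ b ∈ t, G b := Finset.sum_le_sum_of_subset_of_nonneg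
        (Finset.image_subset_iff.mpr hmem) (fun b hb _ => hG b hb)

lemma arith_key (v n d : ℕ) (h : v ≤ n) :
    2 * (v * n + d) = (v * (v - 1) + 2 * d) + (v * (v + 1) + 2 * ((n - v) * v)) := by
  obtain ⟨w, rfl⟩ := Nat.exists_eq_add_of_le h
  cases v with
  | zero => simp
  | succ u =>
    rw [Nat.succ_sub_one, Nat.add_sub_cancel_left]
    ring

lemma gauss_icc (N : ℕ) : 2 * ∑ i ∈ Finset.Icc 1 N, i = N * (N + 1) := by
  induction N with
  | zero => simp
  | succ k ih =>
    rw [Finset.sum_Icc_succ_top (by omega), Nat.mul_add, ih]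
    ring

/-- rank of `a` within `A`. -/
def rk (A : Finset ℕ) (a : ℕ) : ℕ := (A ∩ Finset.Icc 1 a).card

lemma rk_le (A : Finset ℕ) (a : ℕ) : rk A a ≤ a := by
  calc rk A a ≤ (Finset.Icc 1 a).card := Finset.card_le_card Finset.inter_subset_right
    _ = a := by rw [Nat.card_Icc]; omega

lemma rk_pos (A : Finset ℕ) (a : ℕ) (ha : a ∈ A) (h1 : 1 ≤ a) : 1 ≤ rk A a := by
  apply Finset.card_pos.mpr
  exact ⟨a, Finset.mem_inter.mpr ⟨ha, Finset.mem_Icc.mpr ⟨h1, le_refl a⟩⟩⟩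

lemma rk_le_card (A : Finset ℕ) (a : ℕ) : rk A a ≤ A.card :=
  Finset.card_le_card Finset.inter_subset_left

lemma rk_strictMonoOn (A : Finset ℕ) (h1 : ∀ a ∈ A, 1 ≤ a) :
    ∀ a ∈ A, ∀ b ∈ A, a < b → rk A a < rk A b := by
  intro a ha b hb hab
  apply Finset.card_lt_card
  rw [Finset.ssubset_iff_subset_ne]
  constructor
  · exact Finset.inter_subset_inter le_rfl (Finset.Icc_subset_Icc le_rfl hab.le)
  · intro h
    have hbmem : b ∈ A ∩ Finset.Icc 1 b :=
      Finset.mem_inter.mpr ⟨hb, Finset.mem_Icc.mpr ⟨h1 b hb, le_refl b⟩⟩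
    rw [← h] at hbmem
    have := (Finset.mem_Icc.mp (Finset.mem_inter.mp hbmem).2).2
    omega

lemma rk_injOn (A : Finset ℕ) (h1 : ∀ a ∈ A, 1 ≤ a) :
    ∀ a ∈ A, ∀ b ∈ A, rk A a = rk A b → a = b := by
  intro a ha b hb hfab
  rcases lt_trichotomy a b with h | h | h
  · exact absurd hfab (Nat.ne_of_lt (rk_strictMonoOn A h1 a ha b hb h))
  · exact h
  · exact absurd hfab.symm (Nat.ne_of_lt (rk_strictMonoOn A h1 b hb a ha h))

/-- Exponential bound on multi-point correlations: the probability that the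
spins at positions `x 1 < … < x r` (all `≥ max n m`) take the prescribed
values `σ` (with `true` = down = horizontal step, located right of the
interface at `n`) is at most `q^{v(v-1) + 2 ∑ d_k}`, where `v` is the number
of prescribed down spins and `d_k = (x_k - n) σ_k`. -/
theorem stmt16 (q : ℝ) (hq0 : 0 < q) (hq1 : q < 1) (n m r : ℕ)
    (x : Fin r → ℕ) (σ : Fin r → Bool)
    (hmono : StrictMono x)
    (hge : ∀ k, max n m ≤ x k) (hle : ∀ k, x k ≤ n + m)
    (hdown : ∀ k, σ k = true → n < x k) :
    (∑ S ∈ ((Finset.Icc 1 (n + m)).powersetCard n).filter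
        (fun S => ∀ k, (x k ∈ S ↔ σ k = true)),
      q ^ (2 * ∑ a ∈ S, a)) / Z q n m
    ≤ q ^ ((Finset.univ.filter (fun k => σ k = true)).card *
            ((Finset.univ.filter (fun k => σ k = true)).card - 1)
          + 2 * ∑ k, (if σ k then x k - n else 0)) := by
  have hxinj : Function.Injective x := hmono.injective
  set K : Finset (Fin r) := Finset.univ.filter (fun k => σ k = true) with hK
  set dtot : ℕ := ∑ k, (if σ k then x k - n else 0) with hdtot
  set D : Finset ℕ := K.image x with hD
  set v : ℕ := K.card with hv
  have hDcard : D.card = v := Finset.card_image_of_injective _ hxinj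
  have hDmem : ∀ a ∈ D, n < a ∧ a ≤ n + m := by
    intro a ha
    rw [hD, Finset.mem_image] at ha
    obtain ⟨k, hk, rfl⟩ := ha
    rw [hK, Finset.mem_filter] at hk
    exact ⟨hdown k hk.2, hle k⟩
  have hZpos : 0 < Z q n m := by
    unfold Z
    apply Finset.sum_pos
    · intro S _; positivity
    · obtain ⟨T, hT, hTcard⟩ := Finset.exists_subset_card_eq
        (s := Finset.Icc 1 (n + m)) (n := n) (by rw [Nat.card_Icc]; omega)
      exact ⟨T, Finset.mem_powersetCard.mpr ⟨hT, hTcard⟩⟩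
  rcases Nat.lt_or_ge n v with hvn | hvn
  · -- too many prescribed down spins: the constrained family is empty
    have hempty : ((Finset.Icc 1 (n + m)).powersetCard n).filter
        (fun S => ∀ k, (x k ∈ S ↔ σ k = true)) = ∅ := by
      rw [Finset.filter_eq_empty_iff]
      intro S hS hprop
      have hDS : D ⊆ S := by
        intro a ha
        rw [hD, Finset.mem_image] at ha
        obtain ⟨k, hk, rfl⟩ := ha
        rw [hK, Finset.mem_filter] at hk
        exact (hprop k).mpr hk.2
      have hc := Finset.card_le_card hDS
      rw [hDcard, (Finset.mem_powersetCard.mp hS).2] at hc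
      omega
    rw [hempty]
    simp only [Finset.sum_empty, zero_div]
    positivity
  · -- main case : v ≤ n
    set A : Finset ℕ := Finset.Icc 1 (n + m) \ D with hA
    have hDsub : D ⊆ Finset.Icc 1 (n + m) := by
      intro a ha
      exact Finset.mem_Icc.mpr ⟨by have := (hDmem a ha).1; omega, (hDmem a ha).2⟩
    have hAcard : A.card = n + m - v := by
      rw [hA, Finset.card_sdiff_of_subset hDsub, Nat.card_Icc, hDcard]
      omega
    have hA1 : ∀ a ∈ A, 1 ≤ a := by
      intro a ha
      exact (Finset.mem_Icc.mp (Finset.mem_sdiff.mp ha).1).1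
    set g : ℕ → ℕ := fun a => rk A a + v with hg
    set N' : ℝ := ∑ S' ∈ A.powersetCard (n - v), q ^ (2 * ∑ a ∈ S', a) with hN
    -- sum of D
    have hDsum : ∑ a ∈ D, a = v * n + dtot := by
      have h1 : ∑ a ∈ K.image x, a = ∑ k ∈ K, x k :=
        Finset.sum_image (fun a _ b _ h => hxinj h)
      have h2 : dtot = ∑ k ∈ K, (x k - n) := by
        rw [hdtot, hK]
        exact (Finset.sum_filter _ _).symm
      have h3 : ∑ k ∈ K, x k = ∑ k ∈ K, (n + (x k - n)) := by
        apply Finset.sum_congr rfl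
        intro k hk
        rw [hK, Finset.mem_filter] at hk
        have := hdown k hk.2
        omega
      rw [hD, h1, h3, Finset.sum_add_distrib, Finset.sum_const, smul_eq_mul, h2, ← hv]
    -- claim 1
    have claim1 : (∑ S ∈ ((Finset.Icc 1 (n + m)).powersetCard n).filter
          (fun S => ∀ k, (x k ∈ S ↔ σ k = true)), q ^ (2 * ∑ a ∈ S, a))
        ≤ q ^ (2 * (v * n + dtot)) * N' := by
      rw [hN, Finset.mul_sum]
      have hmem' : ∀ S ∈ ((Finset.Icc 1 (n + m)).powersetCard n).filter
          (fun S => ∀ k, (x k ∈ S ↔ σ k = true)),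
          S ⊆ Finset.Icc 1 (n + m) ∧ S.card = n ∧ D ⊆ S := by
        intro S hS
        obtain ⟨hS1, hS2⟩ := Finset.mem_filter.mp hS
        obtain ⟨hsub, hcard⟩ := Finset.mem_powersetCard.mp hS1
        refine ⟨hsub, hcard, ?_⟩
        intro a ha
        rw [hD, Finset.mem_image] at ha
        obtain ⟨k, hk, rfl⟩ := ha
        rw [hK, Finset.mem_filter] at hk
        exact (hS2 k).mpr hk.2
      apply sum_le_sum_inj _ _ (fun S => S \ D) ?_ ?_ _ _ ?_ ?_
      · intro S₁ h₁ S₂ h₂ heq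
        simp only [Finset.mem_coe] at h₁ h₂
        have e₁ := Finset.sdiff_union_of_subset (hmem' S₁ h₁).2.2
        have e₂ := Finset.sdiff_union_of_subset (hmem' S₂ h₂).2.2
        simp only at heq
        rw [← e₁, ← e₂, heq]
      · intro S hS
        obtain ⟨hsub, hcard, hDS⟩ := hmem' S hS
        refine Finset.mem_powersetCard.mpr ⟨?_, ?_⟩
        · exact Finset.sdiff_subset_sdiff hsub le_rfl
        · rw [Finset.card_sdiff_of_subset hDS, hcard, hDcard]
      · intro S hS
        obtain ⟨hsub, hcard, hDS⟩ := hmem' S hS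
        have hsum : ∑ a ∈ S \ D, a + ∑ a ∈ D, a = ∑ a ∈ S, a := Finset.sum_sdiff hDS
        have hexp : 2 * ∑ a ∈ S, a = 2 * (v * n + dtot) + 2 * ∑ a ∈ S \ D, a := by
          rw [← hsum, hDsum]; ring
        rw [hexp, pow_add]
      · intro b _
        positivity
    -- helper facts for claim 2
    have himg_bound : ∀ S' : Finset ℕ, S' ⊆ A → ∀ b ∈ S'.image g, v + 1 ≤ b ∧ b ≤ n + m := by
      intro S' hS' b hb
      obtain ⟨a, ha, rfl⟩ := Finset.mem_image.mp hb
      have h1 := rk_pos A a (hS' ha) (hA1 a (hS' ha))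
      have h2 : rk A a ≤ n + m - v := hAcard ▸ rk_le_card A a
      simp only [hg]
      omega
    have hdisj : ∀ S' : Finset ℕ, S' ⊆ A → Disjoint (Finset.Icc 1 v) (S'.image g) := by
      intro S' hS'
      rw [Finset.disjoint_left]
      intro b hb hb'
      have := (himg_bound S' hS' b hb').1
      have := (Finset.mem_Icc.mp hb).2
      omega
    have hginj : ∀ S' : Finset ℕ, S' ⊆ A → ∀ a ∈ S', ∀ b ∈ S', g a = g b → a = b := by
      intro S' hS' a ha b hb hab
      apply rk_injOn A hA1 a (hS' ha) b (hS' hb)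
      simp only [hg] at hab
      omega
    -- claim 2
    have claim2 : q ^ (v * (v + 1) + 2 * ((n - v) * v)) * N' ≤ Z q n m := by
      rw [hN, Finset.mul_sum]
      unfold Z
      apply sum_le_sum_inj _ _ (fun S' => Finset.Icc 1 v ∪ S'.image g) ?_ ?_ _ _ ?_ ?_
      · -- injectivity
        have key : ∀ S₁ S₂ : Finset ℕ, S₁ ⊆ A → S₂ ⊆ A →
            Finset.Icc 1 v ∪ S₁.image g = Finset.Icc 1 v ∪ S₂.image g → S₁ ⊆ S₂ := by
          intro S₁ S₂ h₁ h₂ heq a ha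
          have hga : g a ∈ Finset.Icc 1 v ∪ S₂.image g := by
            rw [← heq]
            exact Finset.mem_union_right _ (Finset.mem_image_of_mem g ha)
          rcases Finset.mem_union.mp hga with h | h
          · have h5 := (himg_bound S₁ h₁ (g a) (Finset.mem_image_of_mem g ha)).1
            have := (Finset.mem_Icc.mp h).2
            omega
          · obtain ⟨b, hb, hba⟩ := Finset.mem_image.mp h
            have hba' : b = a := by
              apply rk_injOn A hA1 b (h₂ hb) a (h₁ ha)
              simp only [hg] at hba
              omega
            rwa [← hba']
        intro S₁ h₁ S₂ h₂ heq
        simp only [Finset.mem_coe, Finset.mem_powersetCard] at h₁ h₂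
        simp only at heq
        exact Finset.Subset.antisymm (key S₁ S₂ h₁.1 h₂.1 heq) (key S₂ S₁ h₂.1 h₁.1 heq.symm)
      · -- membership
        intro S' hS'
        obtain ⟨hsub, hcard⟩ := Finset.mem_powersetCard.mp hS'
        refine Finset.mem_powersetCard.mpr ⟨?_, ?_⟩
        · apply Finset.union_subset
          · exact Finset.Icc_subset_Icc le_rfl (by omega)
          · intro b hb
            have := himg_bound S' hsub b hb
            exact Finset.mem_Icc.mpr ⟨by omega, this.2⟩
        · rw [Finset.card_union_of_disjoint (hdisj S' hsub), Nat.card_Icc,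
            Finset.card_image_of_injOn (fun a ha b hb h => hginj S' hsub a ha b hb h), hcard]
          omega
      · -- weight comparison
        intro S' hS'
        obtain ⟨hsub, hcard⟩ := Finset.mem_powersetCard.mp hS'
        have hsum_img : ∑ b ∈ S'.image g, b = ∑ a ∈ S', g a :=
          Finset.sum_image (fun a ha b hb h => hginj S' hsub a ha b hb h)
        have hsum_union : ∑ b ∈ Finset.Icc 1 v ∪ S'.image g, b
            = ∑ b ∈ Finset.Icc 1 v, b + ∑ b ∈ S'.image g, b :=
          Finset.sum_union (hdisj S' hsub)
        have hexp : 2 * ∑ b ∈ Finset.Icc 1 v ∪ S'.image g, b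
            ≤ v * (v + 1) + 2 * ((n - v) * v) + 2 * ∑ a ∈ S', a := by
          have hgsum : ∑ a ∈ S', g a = ∑ a ∈ S', rk A a + (n - v) * v := by
            simp only [hg]
            rw [Finset.sum_add_distrib, Finset.sum_const, smul_eq_mul, hcard]
          have h1 : 2 * ∑ b ∈ Finset.Icc 1 v, b = v * (v + 1) := gauss_icc v
          have h2 : ∑ a ∈ S', rk A a ≤ ∑ a ∈ S', a :=
            Finset.sum_le_sum (fun a _ => rk_le A a)
          rw [hsum_union, hsum_img, hgsum]
          omega
        calc q ^ (v * (v + 1) + 2 * ((n - v) * v)) * q ^ (2 * ∑ a ∈ S', a)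
            = q ^ (v * (v + 1) + 2 * ((n - v) * v) + 2 * ∑ a ∈ S', a) := (pow_add q _ _).symm
          _ ≤ q ^ (2 * ∑ b ∈ Finset.Icc 1 v ∪ S'.image g, b) :=
              pow_le_pow_of_le_one hq0.le hq1.le hexp
      · intro b _
        positivity
    -- conclusion
    rw [div_le_iff₀ hZpos]
    calc (∑ S ∈ ((Finset.Icc 1 (n + m)).powersetCard n).filter
          (fun S => ∀ k, (x k ∈ S ↔ σ k = true)), q ^ (2 * ∑ a ∈ S, a))
        ≤ q ^ (2 * (v * n + dtot)) * N' := claim1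
      _ = q ^ (v * (v - 1) + 2 * dtot) * (q ^ (v * (v + 1) + 2 * ((n - v) * v)) * N') := by
          rw [← mul_assoc, ← pow_add, arith_key v n dtot hvn]
      _ ≤ q ^ (v * (v - 1) + 2 * dtot) * Z q n m :=
          mul_le_mul_of_nonneg_left claim2 (by positivity)
end

section
/- Vanishing interface fluctuations: In the weighted path model on words α∈{0,1}^N with N/2 ones (N even), probability proportional to q^{2Σ_k kα_k}, 0<q<1, define F_L(α) = Σ_{x=(N-L)/2+1}^{(N+L)/2} (1/2 - α_x) (total third spin component in the central interval of length L). Then for each integer l, lim_{L→∞} limsup_{N→∞} Prob_N(F_L = l) = δ_{l,0}. -/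
open Finset

/-- `ProbF q N L l` is the probability, in the canonical ensemble of words of
length `N` with `N/2` ones (encoded as the set `S` of positions of the ones,
weight `q^{2∑_{x∈S}x}`), that the total third spin component
`F_L = ∑_{x=(N-L)/2+1}^{(N+L)/2} (1/2 - α_x)` of the central interval of
length `L` equals `l`, i.e. `L - 2·#(S ∩ interval) = 2l`. -/
noncomputable def ProbF (q : ℝ) (N L : ℕ) (l : ℤ) : ℝ :=
  (∑ S ∈ ((Finset.Icc 1 N).powersetCard (N / 2)).filter
      (fun S => (L : ℤ) -
        2 * ((S ∩ Finset.Icc ((N - L) / 2 + 1) ((N + L) / 2)).card : ℤ) = 2 * l),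
    q ^ (2 * ∑ x ∈ S, x)) /
    ∑ S ∈ (Finset.Icc 1 N).powersetCard (N / 2), q ^ (2 * ∑ x ∈ S, x)



lemma sum_ge_tri (m : ℕ) (T : Finset ℕ) (hT : ∀ t ∈ T, m < t) :
    2*m*T.card + T.card*(T.card+1) ≤ 2 * ∑ t ∈ T, t := by
  induction T using Finset.strongInduction with
  | _ T ih =>
    rcases T.eq_empty_or_nonempty with rfl | hne
    · simp
    · set t := T.max' hne with ht
      have htT : t ∈ T := T.max'_mem hne
      have hsub : T ⊆ Icc (m+1) t := by
        intro y hy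
        simp only [mem_Icc]
        exact ⟨hT y hy, T.le_max' y hy⟩
      have hcard : T.card ≤ t - m := by
        simpa [Nat.card_Icc] using Finset.card_le_card hsub
      have herase := ih (T.erase t) (Finset.erase_ssubset htT)
        (fun y hy => hT y (Finset.mem_of_mem_erase hy))
      have hce : (T.erase t).card + 1 = T.card := by
        rw [Finset.card_erase_of_mem htT]
        have : 1 ≤ T.card := Finset.card_pos.2 hne
        omega
      have hsum : ∑ x ∈ T, x = t + ∑ x ∈ T.erase t, x :=
        (Finset.add_sum_erase _ _ htT).symm
      set k := (T.erase t).card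
      have hmt : m + k + 1 ≤ t := by omega
      rw [hsum, ← hce]
      nlinarith [herase, hmt]



lemma energy_bound (N L : ℕ) (hL : L + 1 ≤ N) (S : Finset ℕ)
    (hS : S ⊆ Icc 1 (2*N)) (hcard : S.card = N)
    (hbad : (S ∩ Icc (N - L + 1) (N + L)).card ≠ L) :
    N*(N+1) + 2*L + 2 ≤ 2 * ∑ t ∈ S, t := by
  have hpos : ∀ x ∈ S, 0 < x := fun x hx => (mem_Icc.1 (hS hx)).1
  by_cases hcase : ∃ p ∈ S, N + L + 1 ≤ p
  · obtain ⟨p, hpS, hp⟩ := hcase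
    have herase := sum_ge_tri 0 (S.erase p)
      (fun y hy => hpos y (Finset.mem_of_mem_erase hy))
    have hce : (S.erase p).card + 1 = N := by
      rw [Finset.card_erase_of_mem hpS, hcard]; omega
    have hsum : ∑ x ∈ S, x = p + ∑ x ∈ S.erase p, x :=
      (Finset.add_sum_erase _ _ hpS).symm
    set k := (S.erase p).card
    rw [hsum, ← hce]
    nlinarith [herase, hp]
  · push_neg at hcase
    set M := N - L with hM
    have hMN : M + L = N := by omega
    set low := S.filter (fun x => x ≤ M) with hlow
    set high := S.filter (fun x => ¬ x ≤ M) with hhigh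
    have hcards : low.card + high.card = N := by
      rw [hlow, hhigh, Finset.card_filter_add_card_filter_not, hcard]
    have hinter : S ∩ Icc (N - L + 1) (N + L) = high := by
      ext x
      simp only [mem_inter, mem_Icc, hhigh, mem_filter, not_le, ← hM]
      constructor
      · rintro ⟨hxS, h1, _⟩; exact ⟨hxS, by omega⟩
      · rintro ⟨hxS, h1⟩
        have := hcase x hxS; exact ⟨hxS, by omega, by omega⟩
    rw [hinter] at hbad
    have hlowsub : low ⊆ Icc 1 M := by
      intro x hx
      rw [hlow, mem_filter] at hx
      exact mem_Icc.2 ⟨hpos x hx.1, hx.2⟩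
    have ha : low.card ≤ M := by
      simpa [Nat.card_Icc] using Finset.card_le_card hlowsub
    have he : L + 1 ≤ high.card ∧ low.card + 1 ≤ M := by omega
    have h1 := sum_ge_tri 0 low (fun y hy => hpos y (Finset.mem_of_mem_filter y hy))
    have h2 := sum_ge_tri M high (fun y hy => by
      have := (mem_filter.1 hy).2; omega)
    have hsum : ∑ x ∈ S, x = ∑ x ∈ low, x + ∑ x ∈ high, x :=
      (Finset.sum_filter_add_sum_filter_not _ _ _).symm
    rw [hsum, ← hcards]
    set a := low.card; set e := high.card
    have key : e * (a+1) ≤ e * M := Nat.mul_le_mul_left _ he.2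
    nlinarith [h1, h2, he.1, key]


lemma lemA_s18 (x : ℝ) (hx0 : 0 ≤ x) (hx1 : x < 1) (N : ℕ) : ∀ n : ℕ,
    ∑ S ∈ (range N).powersetCard n, x ^ (∑ i ∈ S, i)
      ≤ x ^ (∑ i ∈ range n, i) * ∏ i ∈ Icc 1 n, (1 - x^i)⁻¹ := by
  have hfacpos : ∀ i : ℕ, 1 ≤ i → (0:ℝ) < 1 - x ^ i := by
    intro i hi
    have : x ^ i < 1 := pow_lt_one₀ hx0 hx1 (by omega)
    linarith
  have hprodpos : ∀ n : ℕ, (0:ℝ) < ∏ i ∈ Icc 1 n, (1 - x^i)⁻¹ := by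
    intro n
    apply Finset.prod_pos
    intro i hi
    exact inv_pos.2 (hfacpos i (mem_Icc.1 hi).1)
  induction N with
  | zero =>
    intro n
    cases n with
    | zero => simp
    | succ m =>
      rw [Finset.range_zero, Finset.powersetCard_eq_empty.2 (by simp)]
      simp only [Finset.sum_empty]
      have := hprodpos (m+1)
      positivity
  | succ N ih =>
    intro n
    cases n with
    | zero => simp
    | succ m =>
      set e : ℕ ↪ ℕ := addRightEmbedding 1 with he
      have heapp : ∀ a : ℕ, e a = a + 1 := fun a => rfl
      have hrange : range (N+1) = insert 0 ((range N).map e) := by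
        ext y
        simp only [mem_range, mem_insert, mem_map, heapp]
        constructor
        · intro hy
          rcases Nat.eq_zero_or_pos y with rfl | hy0
          · left; rfl
          · right; exact ⟨y - 1, by omega, by omega⟩
        · rintro (rfl | ⟨a, ha, rfl⟩) <;> omega
      have h0 : (0:ℕ) ∉ (range N).map e := by
        simp only [mem_map, heapp]
        rintro ⟨a, _, h⟩; omega
      have hsplit : (range (N+1)).powersetCard (m+1)
          = ((range N).map e).powersetCard (m+1)
            ∪ (((range N).map e).powersetCard m).image (insert 0) := by
        rw [hrange, Finset.powersetCard_succ_insert h0]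
      have hdisj : Disjoint (((range N).map e).powersetCard (m+1))
          ((((range N).map e).powersetCard m).image (insert 0)) := by
        rw [Finset.disjoint_left]
        intro S hS1 hS2
        have h1 : S ⊆ (range N).map e := (Finset.mem_powersetCard.1 hS1).1
        obtain ⟨T, hT, rfl⟩ := Finset.mem_image.1 hS2
        exact h0 (h1 (Finset.mem_insert_self 0 T))
      have hmap : ∀ k : ℕ, ∑ S ∈ ((range N).map e).powersetCard k, x ^ (∑ i ∈ S, i)
          = x ^ k * ∑ S ∈ (range N).powersetCard k, x ^ (∑ i ∈ S, i) := by
        intro k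
        rw [Finset.powersetCard_map, Finset.sum_map, Finset.mul_sum]
        apply Finset.sum_congr rfl
        intro S hS
        have hcard : S.card = k := (Finset.mem_powersetCard.1 hS).2
        rw [show ((Finset.mapEmbedding e).toEmbedding S) = S.map e from rfl, Finset.sum_map]
        simp only [heapp]
        rw [Finset.sum_add_distrib, Finset.sum_const, hcard]
        rw [← pow_add]
        ring_nf
      have hinj : ∀ S ∈ ((range N).map e).powersetCard m,
          ∀ T ∈ ((range N).map e).powersetCard m, insert 0 S = insert 0 T → S = T := by
        intro S hS T hT hST
        have hS0 : 0 ∉ S := fun h => h0 ((Finset.mem_powersetCard.1 hS).1 h)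
        have hT0 : 0 ∉ T := fun h => h0 ((Finset.mem_powersetCard.1 hT).1 h)
        have : (insert 0 S).erase 0 = (insert 0 T).erase 0 := by rw [hST]
        rwa [Finset.erase_insert hS0, Finset.erase_insert hT0] at this
      have himg : ∑ S ∈ ((((range N).map e).powersetCard m).image (insert 0)),
            x ^ (∑ i ∈ S, i)
          = ∑ S ∈ ((range N).map e).powersetCard m, x ^ (∑ i ∈ S, i) := by
        rw [Finset.sum_image hinj]
        apply Finset.sum_congr rfl
        intro S hS
        have hS0 : 0 ∉ S := fun h => h0 ((Finset.mem_powersetCard.1 hS).1 h)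
        rw [Finset.sum_insert hS0, zero_add]
      rw [hsplit, Finset.sum_union hdisj, himg, hmap, hmap]
      -- now bound:  x^(m+1) * G(m+1) + x^m * G(m) ≤ x^{T(m)+m} * P(m+1)
      have hG1 := ih (m+1)
      have hG0 := ih m
      have hT1 : (∑ i ∈ range (m+1), i) = (∑ i ∈ range m, i) + m := by
        rw [Finset.sum_range_succ]
      have hP1 : ∏ i ∈ Icc 1 (m+1), (1 - x^i)⁻¹
          = (∏ i ∈ Icc 1 m, (1 - x^i)⁻¹) * (1 - x^(m+1))⁻¹ := by
        rw [← Finset.prod_Icc_succ_top (by omega : 1 ≤ m + 1)]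
      have hxm : (0:ℝ) ≤ x ^ (∑ i ∈ range m, i) := pow_nonneg hx0 _
      have hfp := hfacpos (m+1) (by omega)
      have hPm := hprodpos m
      have hP1m := hprodpos (m+1)
      have hA : (∏ i ∈ Icc 1 m, (1 - x^i)) ≠ 0 := by
        apply ne_of_gt
        apply Finset.prod_pos
        intro i hi
        exact hfacpos i (mem_Icc.1 hi).1
      have hy : (1 - x^(m+1)) ≠ 0 := ne_of_gt hfp
      have key : x^(m+1) * (∏ i ∈ Icc 1 (m+1), (1 - x^i)⁻¹)
          + (∏ i ∈ Icc 1 m, (1 - x^i)⁻¹) = ∏ i ∈ Icc 1 (m+1), (1 - x^i)⁻¹ := by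
        rw [hP1]
        field_simp
        ring
      calc x^(m+1) * ∑ S ∈ (range N).powersetCard (m+1), x ^ (∑ i ∈ S, i)
            + x^m * ∑ S ∈ (range N).powersetCard m, x ^ (∑ i ∈ S, i)
          ≤ x^(m+1) * (x ^ (∑ i ∈ range (m+1), i) * ∏ i ∈ Icc 1 (m+1), (1 - x^i)⁻¹)
            + x^m * (x ^ (∑ i ∈ range m, i) * ∏ i ∈ Icc 1 m, (1 - x^i)⁻¹) := by
            exact add_le_add (mul_le_mul_of_nonneg_left hG1 (pow_nonneg hx0 _))
              (mul_le_mul_of_nonneg_left hG0 (pow_nonneg hx0 _))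
        _ = x ^ (∑ i ∈ range (m+1), i)
            * (x^(m+1) * (∏ i ∈ Icc 1 (m+1), (1 - x^i)⁻¹) + ∏ i ∈ Icc 1 m, (1 - x^i)⁻¹) := by
            rw [hT1, pow_add]; ring
        _ = x ^ (∑ i ∈ range (m+1), i) * ∏ i ∈ Icc 1 (m+1), (1 - x^i)⁻¹ := by rw [key]



lemma range_succ_eq_insert_Icc (n : ℕ) : range (n+1) = insert 0 (Icc 1 n) := by
  ext y; simp only [mem_range, mem_insert, mem_Icc]; omega

lemma sum_Icc_id_eq (n : ℕ) : ∑ i ∈ Icc 1 n, i = (∑ i ∈ range n, i) + n := by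
  have h1 : ∑ i ∈ range (n+1), i = ∑ i ∈ range n, i + n := Finset.sum_range_succ _ _
  have h2 : ∑ i ∈ range (n+1), i = ∑ i ∈ Icc 1 n, i := by
    rw [range_succ_eq_insert_Icc, Finset.sum_insert (by simp), zero_add]
  omega

lemma lemA' (x : ℝ) (hx0 : 0 ≤ x) (hx1 : x < 1) (N n : ℕ) :
    ∑ S ∈ (Icc 1 N).powersetCard n, x ^ (∑ i ∈ S, i)
      ≤ x ^ (∑ i ∈ Icc 1 n, i) * ∏ i ∈ Icc 1 n, (1 - x^i)⁻¹ := by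
  set e : ℕ ↪ ℕ := addRightEmbedding 1 with he
  have heapp : ∀ a : ℕ, e a = a + 1 := fun a => rfl
  have hIcc : Icc 1 N = (range N).map e := by
    ext y
    simp only [mem_Icc, mem_map, heapp]
    constructor
    · intro hy; exact ⟨y - 1, by simp only [mem_range]; omega, by omega⟩
    · rintro ⟨a, ha, rfl⟩; simp only [mem_range] at ha; omega
  have hmap : ∑ S ∈ ((range N).map e).powersetCard n, x ^ (∑ i ∈ S, i)
      = x ^ n * ∑ S ∈ (range N).powersetCard n, x ^ (∑ i ∈ S, i) := by
    rw [Finset.powersetCard_map, Finset.sum_map, Finset.mul_sum]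
    apply Finset.sum_congr rfl
    intro S hS
    have hcard : S.card = n := (Finset.mem_powersetCard.1 hS).2
    rw [show ((Finset.mapEmbedding e).toEmbedding S) = S.map e from rfl, Finset.sum_map]
    simp only [heapp]
    rw [Finset.sum_add_distrib, Finset.sum_const, hcard, ← pow_add]
    ring_nf
  rw [hIcc, hmap, sum_Icc_id_eq, pow_add]
  have := lemA_s18 x hx0 hx1 N n
  have hxn : (0:ℝ) ≤ x ^ n := pow_nonneg hx0 _
  calc x ^ n * ∑ S ∈ (range N).powersetCard n, x ^ (∑ i ∈ S, i)
      ≤ x ^ n * (x ^ (∑ i ∈ range n, i) * ∏ i ∈ Icc 1 n, (1 - x^i)⁻¹) :=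
        mul_le_mul_of_nonneg_left this hxn
    _ = x ^ (∑ i ∈ range n, i) * x ^ n * ∏ i ∈ Icc 1 n, (1 - x^i)⁻¹ := by ring

lemma prod_bound (x : ℝ) (hx0 : 0 < x) (hx1 : x < 1) (n : ℕ) :
    ∏ i ∈ Icc 1 n, (1 - x^i)⁻¹ ≤ Real.exp (x / (1-x)^2) := by
  have hxd : (0:ℝ) < 1 - x := by linarith
  have hstep : ∀ i ∈ Icc 1 n, (1 - x^i)⁻¹ ≤ Real.exp (x^i / (1-x)) := by
    intro i hi
    have hi1 : 1 ≤ i := (mem_Icc.1 hi).1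
    have hxi : x^i ≤ x := pow_le_of_le_one (le_of_lt hx0) (le_of_lt hx1) (by omega)
    have hxipos : (0:ℝ) < x^i := pow_pos hx0 _
    have hfac : (0:ℝ) < 1 - x^i := by linarith
    have h1 : (1 - x^i)⁻¹ ≤ 1 + x^i / (1-x) := by
      rw [inv_le_iff_one_le_mul₀ hfac]
      have key : (1 + x^i/(1-x)) * (1-x^i) - 1 = (x - x^i)*(x^i)/(1-x) := by
        field_simp; ring
      nlinarith [div_nonneg (mul_nonneg (by linarith : (0:ℝ) ≤ x - x^i)
        (le_of_lt hxipos)) (le_of_lt hxd)]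
    have h2 : 1 + x^i/(1-x) ≤ Real.exp (x^i/(1-x)) := by
      have := Real.add_one_le_exp (x^i/(1-x))
      linarith
    linarith
  calc ∏ i ∈ Icc 1 n, (1 - x^i)⁻¹
      ≤ ∏ i ∈ Icc 1 n, Real.exp (x^i / (1-x)) := by
        apply Finset.prod_le_prod
        · intro i hi
          have hi1 : 1 ≤ i := (mem_Icc.1 hi).1
          have : x^i < 1 := pow_lt_one₀ (le_of_lt hx0) hx1 (by omega)
          exact inv_nonneg.2 (by linarith)
        · exact hstep
    _ = Real.exp (∑ i ∈ Icc 1 n, x^i / (1-x)) := (Real.exp_sum _ _).symm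
    _ ≤ Real.exp (x / (1-x)^2) := by
        apply Real.exp_le_exp.2
        rw [← Finset.sum_div]
        rw [div_le_div_iff₀ hxd (by positivity)]
        have hgeom : ∑ i ∈ Icc 1 n, x^i ≤ x / (1-x) := by
          have hins : ∑ i ∈ range (n+1), x^i = 1 + ∑ i ∈ Icc 1 n, x^i := by
            rw [range_succ_eq_insert_Icc, Finset.sum_insert (by simp)]
            simp
          have hgs : ∑ i ∈ range (n+1), x^i = (x^(n+1) - 1)/(x - 1) :=
            geom_sum_eq (ne_of_lt hx1) (n+1)
          have heq : (x^(n+1) - 1)/(x - 1) = (1 - x^(n+1))/(1-x) := by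
            rw [div_eq_div_iff (by linarith) (by linarith)]
            ring
          have hle : ∑ i ∈ range (n+1), x^i ≤ 1/(1-x) := by
            rw [hgs, heq]
            have hp : (0:ℝ) < x^(n+1) := pow_pos hx0 _
            gcongr
            linarith
          have : x/(1-x) = 1/(1-x) - 1 := by field_simp; ring
          linarith
        calc (∑ i ∈ Icc 1 n, x^i) * (1-x)^2 ≤ (x/(1-x)) * (1-x)^2 := by
              apply mul_le_mul_of_nonneg_right hgeom (by positivity)
          _ = x * (1-x) := by field_simp

lemma ground_mem (N n : ℕ) (h : n ≤ N) : Icc 1 n ∈ (Icc 1 N).powersetCard n := by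
  rw [Finset.mem_powersetCard]
  exact ⟨Finset.Icc_subset_Icc le_rfl h, by simp⟩

lemma Z_pos_s18 (q : ℝ) (hq0 : 0 < q) (N : ℕ) :
    0 < ∑ S ∈ (Finset.Icc 1 N).powersetCard (N / 2), q ^ (2 * ∑ x ∈ S, x) := by
  apply Finset.sum_pos (fun S _ => pow_pos hq0 _)
  exact ⟨Icc 1 (N/2), ground_mem N (N/2) (by omega)⟩

lemma probF_nonneg (q : ℝ) (hq0 : 0 < q) (N L : ℕ) (l : ℤ) : 0 ≤ ProbF q N L l := by
  apply div_nonneg _ (le_of_lt (Z_pos_s18 q hq0 N))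
  exact Finset.sum_nonneg (fun S _ => le_of_lt (pow_pos hq0 _))

lemma probF_le_one (q : ℝ) (hq0 : 0 < q) (N L : ℕ) (l : ℤ) : ProbF q N L l ≤ 1 := by
  rw [ProbF, div_le_one (Z_pos_s18 q hq0 N)]
  exact Finset.sum_le_sum_of_subset_of_nonneg (Finset.filter_subset _ _)
    (fun S _ _ => le_of_lt (pow_pos hq0 _))

lemma badsum_le (q : ℝ) (hq0 : 0 < q) (hq1 : q < 1) (N L : ℕ) (hL : L + 1 ≤ N) :
    ∑ S ∈ ((Icc 1 (2*N)).powersetCard N).filter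
        (fun S => (S ∩ Icc (N - L + 1) (N + L)).card ≠ L), q ^ (2 * ∑ x ∈ S, x)
      ≤ Real.exp (q / (1-q)^2) * q ^ (L+1) *
          q ^ (2 * ∑ i ∈ Icc 1 N, i) := by
  set g := ∑ i ∈ Icc 1 N, i with hg
  have hq0' : (0:ℝ) ≤ q := le_of_lt hq0
  have hterm : ∀ S ∈ ((Icc 1 (2*N)).powersetCard N).filter
      (fun S => (S ∩ Icc (N - L + 1) (N + L)).card ≠ L),
      q ^ (2 * ∑ x ∈ S, x) ≤ q ^ (g + L + 1) * q ^ (∑ x ∈ S, x) := by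
    intro S hS
    rw [Finset.mem_filter, Finset.mem_powersetCard] at hS
    obtain ⟨⟨hsub, hcard⟩, hbad⟩ := hS
    have hE := energy_bound N L hL S hsub hcard hbad
    have h2g : 2 * g = N * (N+1) := by
      have h1 := Finset.sum_range_id_mul_two (N+1)
      have h2 := sum_Icc_id_eq N
      have h3 := Finset.sum_range_succ (fun i => i) N
      have hc : (N+1) * ((N+1) - 1) = N * (N+1) := by
        rw [Nat.add_sub_cancel, Nat.mul_comm]
      omega
    have hge : g + L + 1 ≤ ∑ x ∈ S, x := by omega
    calc q ^ (2 * ∑ x ∈ S, x) = q ^ (∑ x ∈ S, x) * q ^ (∑ x ∈ S, x) := by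
          rw [two_mul, pow_add]
      _ ≤ q ^ (g + L + 1) * q ^ (∑ x ∈ S, x) := by
          apply mul_le_mul_of_nonneg_right _ (pow_nonneg hq0' _)
          exact pow_le_pow_of_le_one hq0' (le_of_lt hq1) hge
  calc ∑ S ∈ ((Icc 1 (2*N)).powersetCard N).filter
        (fun S => (S ∩ Icc (N - L + 1) (N + L)).card ≠ L), q ^ (2 * ∑ x ∈ S, x)
      ≤ ∑ S ∈ ((Icc 1 (2*N)).powersetCard N).filter
        (fun S => (S ∩ Icc (N - L + 1) (N + L)).card ≠ L),
          q ^ (g + L + 1) * q ^ (∑ x ∈ S, x) := Finset.sum_le_sum hterm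
    _ = q ^ (g + L + 1) * ∑ S ∈ ((Icc 1 (2*N)).powersetCard N).filter
        (fun S => (S ∩ Icc (N - L + 1) (N + L)).card ≠ L), q ^ (∑ x ∈ S, x) := by
          rw [Finset.mul_sum]
    _ ≤ q ^ (g + L + 1) * ∑ S ∈ (Icc 1 (2*N)).powersetCard N, q ^ (∑ x ∈ S, x) := by
          apply mul_le_mul_of_nonneg_left _ (pow_nonneg hq0' _)
          exact Finset.sum_le_sum_of_subset_of_nonneg (Finset.filter_subset _ _)
            (fun S _ _ => pow_nonneg hq0' _)
    _ ≤ q ^ (g + L + 1) * (q ^ g * Real.exp (q / (1-q)^2)) := by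
          apply mul_le_mul_of_nonneg_left _ (pow_nonneg hq0' _)
          calc ∑ S ∈ (Icc 1 (2*N)).powersetCard N, q ^ (∑ x ∈ S, x)
              ≤ q ^ (∑ i ∈ Icc 1 N, i) * ∏ i ∈ Icc 1 N, (1 - q^i)⁻¹ :=
                lemA' q hq0' hq1 (2*N) N
            _ ≤ q ^ g * Real.exp (q / (1-q)^2) := by
                apply mul_le_mul_of_nonneg_left (prod_bound q hq0 hq1 N)
                  (pow_nonneg hq0' _)
    _ = Real.exp (q / (1-q)^2) * q ^ (L+1) * q ^ (2 * g) := by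
        rw [two_mul, pow_add, pow_add, pow_add, pow_add]
        ring

lemma main_est (q : ℝ) (hq0 : 0 < q) (hq1 : q < 1) (N L : ℕ) (hL : L + 1 ≤ N) :
    (∀ l : ℤ, l ≠ 0 → ProbF q (2*N) (2*L) l ≤ Real.exp (q/(1-q)^2) * q^L)
  ∧ 1 - Real.exp (q/(1-q)^2) * q^L ≤ ProbF q (2*N) (2*L) 0 := by
  have hq0' : (0:ℝ) ≤ q := le_of_lt hq0
  have hE : Real.exp (q/(1-q)^2) > 0 := Real.exp_pos _
  set g := ∑ i ∈ Icc 1 N, i with hg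
  set E := (Icc 1 (2*N)).powersetCard N with hEdef
  set Z := ∑ S ∈ E, q ^ (2 * ∑ x ∈ S, x) with hZdef
  have hZpos : 0 < Z := by
    apply Finset.sum_pos (fun S _ => pow_pos hq0 _)
    exact ⟨Icc 1 N, ground_mem (2*N) N (by omega)⟩
  have hZge : q ^ (2*g) ≤ Z := by
    apply Finset.single_le_sum (f := fun S => q ^ (2 * ∑ x ∈ S, x))
      (fun S _ => pow_nonneg hq0' _) (ground_mem (2*N) N (by omega))
  set bad := E.filter (fun S => (S ∩ Icc (N - L + 1) (N + L)).card ≠ L) with hbaddef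
  set badsum := ∑ S ∈ bad, q ^ (2 * ∑ x ∈ S, x) with hbadsumdef
  have hbs := badsum_le q hq0 hq1 N L hL
  have hbadsum_nonneg : 0 ≤ badsum :=
    Finset.sum_nonneg (fun S _ => pow_nonneg hq0' _)
  have hratio : badsum / Z ≤ Real.exp (q/(1-q)^2) * q^(L+1) := by
    rw [div_le_iff₀ hZpos]
    calc badsum ≤ Real.exp (q/(1-q)^2) * q^(L+1) * q^(2*g) := hbs
      _ ≤ Real.exp (q/(1-q)^2) * q^(L+1) * Z := by
          apply mul_le_mul_of_nonneg_left hZge (by positivity)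
  have hq1' : q ^ (L+1) ≤ q ^ L := pow_le_pow_of_le_one hq0' (le_of_lt hq1) (by omega)
  have hratio' : badsum / Z ≤ Real.exp (q/(1-q)^2) * q^L := by
    calc badsum / Z ≤ Real.exp (q/(1-q)^2) * q^(L+1) := hratio
      _ ≤ Real.exp (q/(1-q)^2) * q^L := by
          apply mul_le_mul_of_nonneg_left hq1' (le_of_lt hE)
  have hsimp : ∀ l : ℤ, ProbF q (2*N) (2*L) l
      = (∑ S ∈ E.filter (fun S =>
          ((2*L : ℕ) : ℤ) - 2 * ((S ∩ Icc (N - L + 1) (N + L)).card : ℤ) = 2 * l),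
          q ^ (2 * ∑ x ∈ S, x)) / Z := by
    intro l
    rw [ProbF]
    have e1 : (2*N)/2 = N := by omega
    have e2 : (2*N - 2*L)/2 + 1 = N - L + 1 := by omega
    have e3 : (2*N + 2*L)/2 = N + L := by omega
    simp only [e1, e2, e3]
    rfl
  constructor
  · intro l hl
    rw [hsimp l]
    have hsub : E.filter (fun S =>
        ((2*L : ℕ) : ℤ) - 2 * ((S ∩ Icc (N - L + 1) (N + L)).card : ℤ) = 2 * l) ⊆ bad := by
      intro S hS
      rw [Finset.mem_filter] at hS ⊢
      refine ⟨hS.1, fun hcard => ?_⟩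
      have := hS.2
      rw [hcard] at this
      push_cast at this
      omega
    have hnum : (∑ S ∈ E.filter (fun S =>
        ((2*L : ℕ) : ℤ) - 2 * ((S ∩ Icc (N - L + 1) (N + L)).card : ℤ) = 2 * l),
          q ^ (2 * ∑ x ∈ S, x)) ≤ badsum :=
      Finset.sum_le_sum_of_subset_of_nonneg hsub (fun S _ _ => pow_nonneg hq0' _)
    calc _ ≤ badsum / Z := by gcongr
      _ ≤ _ := hratio'
  · rw [hsimp 0]
    have hfeq : E.filter (fun S =>
        ((2*L : ℕ) : ℤ) - 2 * ((S ∩ Icc (N - L + 1) (N + L)).card : ℤ) = 2 * 0)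
        = E.filter (fun S => (S ∩ Icc (N - L + 1) (N + L)).card = L) := by
      apply Finset.filter_congr
      intro S _
      constructor
      · intro h; push_cast at h; omega
      · intro h; rw [h]; push_cast; ring
    rw [hfeq]
    have hsplit : (∑ S ∈ E.filter (fun S => (S ∩ Icc (N - L + 1) (N + L)).card = L),
          q ^ (2 * ∑ x ∈ S, x)) + badsum = Z := by
      rw [hbadsumdef, hbaddef]
      exact Finset.sum_filter_add_sum_filter_not E _ _
    have : (∑ S ∈ E.filter (fun S => (S ∩ Icc (N - L + 1) (N + L)).card = L),
          q ^ (2 * ∑ x ∈ S, x)) = Z - badsum := by linarith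
    rw [this, sub_div, div_self (ne_of_gt hZpos)]
    linarith


/-- Vanishing interface fluctuations:
`lim_{L→∞} limsup_{N→∞} Prob_N(F_L = l) = δ_{l,0}` (with `N = 2N'`, `L = 2L'`
running over even numbers). -/
theorem stmt18 (q : ℝ) (hq0 : 0 < q) (hq1 : q < 1) (l : ℤ) :
    Filter.Tendsto
      (fun L : ℕ =>
        Filter.limsup (fun N : ℕ => ProbF q (2 * N) (2 * L) l) Filter.atTop)
      Filter.atTop (nhds (if l = 0 then (1 : ℝ) else 0)) := by
  have hq0' : (0:ℝ) ≤ q := le_of_lt hq0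
  set C := Real.exp (q/(1-q)^2) with hC
  have hCpos : 0 < C := Real.exp_pos _
  have hub : ∀ L N : ℕ, ProbF q (2*N) (2*L) l ≤ 1 :=
    fun L N => probF_le_one q hq0 _ _ _
  have hlb : ∀ L N : ℕ, 0 ≤ ProbF q (2*N) (2*L) l :=
    fun L N => probF_nonneg q hq0 _ _ _
  have hbdd : ∀ L : ℕ, Filter.IsBoundedUnder (· ≤ ·) Filter.atTop
      (fun N : ℕ => ProbF q (2*N) (2*L) l) :=
    fun L => Filter.isBoundedUnder_of ⟨1, fun N => hub L N⟩
  have hcob : ∀ L : ℕ, Filter.IsCoboundedUnder (· ≤ ·) Filter.atTop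
      (fun N : ℕ => ProbF q (2*N) (2*L) l) :=
    fun L => Filter.isCoboundedUnder_le_of_le Filter.atTop (fun N => hlb L N)
  have htop : ∀ L : ℕ, Filter.limsup (fun N : ℕ => ProbF q (2*N) (2*L) l)
      Filter.atTop ≤ 1 :=
    fun L => Filter.limsup_le_of_le (hcob L) (Filter.Eventually.of_forall (hub L))
  have hCq : Filter.Tendsto (fun L : ℕ => C * q^L) Filter.atTop (nhds 0) := by
    have := (tendsto_pow_atTop_nhds_zero_of_lt_one hq0' hq1).const_mul C
    simpa using this
  by_cases hl : l = 0
  · subst hl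
    simp only [if_pos]
    apply tendsto_of_tendsto_of_tendsto_of_le_of_le
      (g := fun L : ℕ => 1 - C * q^L) (h := fun _ : ℕ => (1:ℝ))
    · have := Filter.Tendsto.sub (tendsto_const_nhds (x := (1:ℝ))) hCq
      simpa using this
    · exact tendsto_const_nhds
    · intro L
      apply Filter.le_limsup_of_frequently_le _ (hbdd L)
      apply Filter.Eventually.frequently
      rw [Filter.eventually_atTop]
      exact ⟨L+1, fun N hN => (main_est q hq0 hq1 N L hN).2⟩
    · exact htop
  · simp only [if_neg hl]
    apply squeeze_zero (g := fun L : ℕ => C * q^L)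
    · intro L
      apply Filter.le_limsup_of_frequently_le _ (hbdd L)
      exact Filter.Eventually.frequently (Filter.Eventually.of_forall (hlb L))
    · intro L
      apply Filter.limsup_le_of_le (hcob L)
      rw [Filter.eventually_atTop]
      exact ⟨L+1, fun N hN => (main_est q hq0 hq1 N L hN).1 l hl⟩
    · exact hCq
end

section
/- Dimensional reduction: For positive integers N, M and 0 ≤ k ≤ NM, the coefficient Z_{2d}(k) of z^k in prod_{j=N}^{N+M-1}(1+zq^{2j})^N satisfies Z_{2d}(k) = q^{2(N-1)k} · Σ over tuples (k_0,k_1,...,k_M) of nonnegative integers with Σ_i k_i = N and Σ_i i·k_i = k, of the multinomial coefficient N!/(k_0!·k_1!···k_M!) times prod_{j=1}^{M} Z(j,M-j)^{k_j}, where Z(j,M-j) = q^{j(j+1)}·binom_{q^2}(M,j) is the one-dimensional partition function. -/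
open Finset

/-- One-dimensional weighted path partition function:
`Z(n,m) = ∑_{1 ≤ x₁ < … < x_n ≤ n+m} q^{2(x₁+…+x_n)}`. -/
noncomputable def Z1 (q : ℝ) (n m : ℕ) : ℝ :=
  ∑ S ∈ (Finset.Icc 1 (n + m)).powersetCard n, q ^ (2 * ∑ x ∈ S, x)

open Polynomial in
/-- Key expansion of the base product as a polynomial in `X`. -/
lemma keyQ (q : ℝ) (N M : ℕ) (hN : 0 < N) :
    ∏ j ∈ Finset.Ico N (N + M), ((1 : Polynomial ℝ) + Polynomial.C (q ^ (2 * j)) * Polynomial.X)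
      = ∑ l ∈ Finset.range (M + 1),
          Polynomial.C (q ^ (2 * (N - 1) * l) * Z1 q l (M - l)) * Polynomial.X ^ l := by
  have hIco : Finset.Ico N (N + M) = (Finset.Icc 1 M).map (addRightEmbedding (N - 1)) := by
    rw [Finset.map_add_right_Icc]
    have h1 : 1 + (N - 1) = N := by omega
    have h2 : N + M = (M + (N - 1)) + 1 := by omega
    rw [h1, h2, Finset.Ico_add_one_right_eq_Icc]
  rw [hIco, Finset.prod_map]
  have hfac : ∀ x : ℕ, (1 : Polynomial ℝ)
      + Polynomial.C (q ^ (2 * (addRightEmbedding (N - 1) x))) * Polynomial.X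
      = Polynomial.C (q ^ (2 * (N - 1)) * q ^ (2 * x)) * Polynomial.X + 1 := by
    intro x
    have hx : (addRightEmbedding (N - 1)) x = x + (N - 1) := rfl
    have hx2 : 2 * (x + (N - 1)) = 2 * (N - 1) + 2 * x := by omega
    rw [hx, hx2, pow_add]
    ring
  simp only [hfac]
  rw [Finset.prod_add]
  have hcard : (Finset.Icc 1 M).card = M := by rw [Nat.card_Icc]; omega
  rw [Finset.sum_powerset, hcard]
  refine Finset.sum_congr rfl fun l hl => ?_
  have hlM : l ≤ M := by simpa using Nat.lt_succ_iff.mp (Finset.mem_range.mp hl)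
  have hterm : ∀ t ∈ (Finset.Icc 1 M).powersetCard l,
      (∏ x ∈ t, Polynomial.C (q ^ (2 * (N - 1)) * q ^ (2 * x)) * Polynomial.X) *
        ∏ x ∈ (Finset.Icc 1 M) \ t, (1 : Polynomial ℝ)
      = Polynomial.C (q ^ (2 * (N - 1) * l) * q ^ (2 * ∑ x ∈ t, x)) * Polynomial.X ^ l := by
    intro t ht
    obtain ⟨hsub, hc⟩ := Finset.mem_powersetCard.mp ht
    rw [Finset.prod_const_one, mul_one, Finset.prod_mul_distrib, Finset.prod_const, hc,
      ← map_prod]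
    congr 2
    rw [Finset.prod_mul_distrib, Finset.prod_const, hc, ← pow_mul,
      Finset.prod_pow_eq_pow_sum, ← Finset.mul_sum]
  rw [Finset.sum_congr rfl hterm, ← Finset.sum_mul, ← map_sum]
  congr 2
  rw [← Finset.mul_sum]
  congr 1
  unfold Z1
  have : l + (M - l) = M := by omega
  rw [this]

lemma g_le (M N : ℕ) (g : ℕ → ℕ) (hg : g ∈ Finset.piAntidiag (Finset.range (M + 1)) N)
    (i : ℕ) (hi : i < M + 1) : g i ≤ N := by
  rw [Finset.mem_piAntidiag] at hg
  calc g i ≤ ∑ j ∈ Finset.range (M + 1), g j :=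
        Finset.single_le_sum (fun _ _ => Nat.zero_le _) (Finset.mem_range.mpr hi)
    _ = N := hg.1

/-- Dimensional reduction: the coefficient of `z^k` in
`∏_{j=N}^{N+M-1} (1 + z q^{2j})^N` equals
`q^{2(N-1)k} ∑_{(k_0,…,k_M)} N!/(k_0!⋯k_M!) ∏_j Z(j,M-j)^{k_j}`,
summing over tuples of nonnegative integers with `∑ k_i = N` and
`∑ i·k_i = k`. (Note `Z(0,M) = 1`, so the product may run over all `j`.) -/
theorem stmt19 (q : ℝ) (N M k : ℕ) (hN : 0 < N) (hM : 0 < M) (hk : k ≤ N * M) :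
    (∏ j ∈ Finset.Ico N (N + M),
        ((1 : Polynomial ℝ) + Polynomial.C (q ^ (2 * j)) * Polynomial.X) ^ N).coeff k
    = q ^ (2 * (N - 1) * k) *
        ∑ g ∈ (Finset.univ : Finset (Fin (M + 1) → Fin (N + 1))).filter
            (fun g => (∑ i, (g i : ℕ)) = N ∧ (∑ i, i.1 * (g i : ℕ)) = k),
          (Nat.multinomial Finset.univ (fun i => (g i : ℕ)) : ℝ) *
            ∏ i : Fin (M + 1), (Z1 q i.1 (M - i.1)) ^ (g i : ℕ) := by
  rw [Finset.prod_pow, keyQ q N M hN, Finset.sum_pow_eq_sum_piAntidiag,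
    Polynomial.finset_sum_coeff]
  -- compute each coefficient
  have hterm : ∀ g ∈ Finset.piAntidiag (Finset.range (M + 1)) N,
      ((Nat.multinomial (Finset.range (M + 1)) g : Polynomial ℝ) *
        ∏ i ∈ Finset.range (M + 1),
          (Polynomial.C (q ^ (2 * (N - 1) * i) * Z1 q i (M - i)) * Polynomial.X ^ i) ^ g i).coeff k
      = if (∑ i ∈ Finset.range (M + 1), i * g i) = k then
          (Nat.multinomial (Finset.range (M + 1)) g : ℝ) *
            (q ^ (2 * (N - 1) * k) * ∏ i ∈ Finset.range (M + 1), (Z1 q i (M - i)) ^ g i)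
        else 0 := by
    intro g hg
    have hprod : ∏ i ∈ Finset.range (M + 1),
        (Polynomial.C (q ^ (2 * (N - 1) * i) * Z1 q i (M - i)) * Polynomial.X ^ i) ^ g i
        = Polynomial.C (∏ i ∈ Finset.range (M + 1), (q ^ (2 * (N - 1) * i) * Z1 q i (M - i)) ^ g i)
            * Polynomial.X ^ (∑ i ∈ Finset.range (M + 1), i * g i) := by
      calc ∏ i ∈ Finset.range (M + 1),
            (Polynomial.C (q ^ (2 * (N - 1) * i) * Z1 q i (M - i)) * Polynomial.X ^ i) ^ g i
          = ∏ i ∈ Finset.range (M + 1),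
            (Polynomial.C ((q ^ (2 * (N - 1) * i) * Z1 q i (M - i)) ^ g i) *
              Polynomial.X ^ (i * g i)) := by
            refine Finset.prod_congr rfl fun i _ => ?_
            rw [mul_pow, ← Polynomial.C_pow, ← pow_mul]
        _ = _ := by
            rw [Finset.prod_mul_distrib, ← map_prod, Finset.prod_pow_eq_pow_sum]
    rw [hprod, ← Polynomial.C_eq_natCast, ← mul_assoc, ← Polynomial.C_mul,
      Polynomial.coeff_C_mul, Polynomial.coeff_X_pow]
    by_cases hek : (∑ i ∈ Finset.range (M + 1), i * g i) = k
    · rw [if_pos hek, if_pos hek.symm, mul_one]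
      have : ∏ i ∈ Finset.range (M + 1), (q ^ (2 * (N - 1) * i) * Z1 q i (M - i)) ^ g i
          = q ^ (2 * (N - 1) * k) * ∏ i ∈ Finset.range (M + 1), (Z1 q i (M - i)) ^ g i := by
        simp_rw [mul_pow, Finset.prod_mul_distrib, ← pow_mul, Finset.prod_pow_eq_pow_sum]
        congr 2
        rw [← hek, Finset.mul_sum]
        exact Finset.sum_congr rfl fun i _ => by ring
      rw [this]
    · rw [if_neg hek, if_neg (fun h => hek h.symm), mul_zero]
  rw [Finset.sum_congr rfl hterm, ← Finset.sum_filter, Finset.mul_sum]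
  -- now a bijection between the two index sets
  refine Finset.sum_nbij' (fun g (i : Fin (M + 1)) => (⟨min (g i.1) N, by omega⟩ : Fin (N + 1)))
    (fun h n => if hn : n < M + 1 then (h ⟨n, hn⟩ : ℕ) else 0) ?_ ?_ ?_ ?_ ?_
  · intro g hg
    rw [Finset.mem_filter] at hg
    obtain ⟨hg1, hg2⟩ := hg
    have hle : ∀ i : Fin (M + 1), min (g i.1) N = g i.1 := fun i =>
      min_eq_left (g_le M N g hg1 i.1 i.isLt)
    simp only [Finset.mem_filter, Finset.mem_univ, true_and]
    constructor
    · simp only [hle]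
      rw [Fin.sum_univ_eq_sum_range]
      exact (Finset.mem_piAntidiag.mp hg1).1
    · simp only [hle]
      rw [Fin.sum_univ_eq_sum_range (fun i => i * g i)]
      exact hg2
  · intro h hh
    simp only [Finset.mem_filter, Finset.mem_univ, true_and] at hh
    obtain ⟨hh1, hh2⟩ := hh
    simp only [Finset.mem_filter]
    refine ⟨Finset.mem_piAntidiag.mpr ⟨?_, ?_⟩, ?_⟩
    · show ∑ n ∈ Finset.range (M + 1), (if hn : n < M + 1 then ((h ⟨n, hn⟩ : Fin (N + 1)) : ℕ) else 0) = N
      rw [← Fin.sum_univ_eq_sum_range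
        (fun n => if hn : n < M + 1 then ((h ⟨n, hn⟩ : Fin (N + 1)) : ℕ) else 0)]
      exact (Finset.sum_congr rfl fun i _ => by simp [i.isLt]).trans hh1
    · intro n hn
      by_contra hmem
      simp only [dif_neg (fun c => hmem (Finset.mem_range.mpr c))] at hn
      exact hn rfl
    · show ∑ n ∈ Finset.range (M + 1),
          n * (if hn : n < M + 1 then ((h ⟨n, hn⟩ : Fin (N + 1)) : ℕ) else 0) = k
      rw [← Fin.sum_univ_eq_sum_range
        (fun n => n * if hn : n < M + 1 then ((h ⟨n, hn⟩ : Fin (N + 1)) : ℕ) else 0)]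
      exact (Finset.sum_congr rfl fun i _ => by simp [i.isLt]).trans hh2
  · intro g hg
    rw [Finset.mem_filter] at hg
    funext n
    show (if hn : n < M + 1 then (((⟨min (g n) N, by omega⟩ : Fin (N + 1))) : ℕ) else 0) = g n
    by_cases hn : n < M + 1
    · simp only [dif_pos hn]
      exact min_eq_left (g_le M N g hg.1 n hn)
    · simp only [dif_neg hn]
      by_contra hne
      exact hn (Finset.mem_range.mp ((Finset.mem_piAntidiag.mp hg.1).2 n fun c => hne c.symm))
  · intro h hh
    funext i
    apply Fin.ext
    show min (if hn : (i : ℕ) < M + 1 then ((h ⟨i, hn⟩ : Fin (N + 1)) : ℕ) else 0) N = (h i : ℕ)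
    have hb : (h i : ℕ) ≤ N := Nat.lt_succ_iff.mp (h i).isLt
    simp only [dif_pos i.isLt, Fin.eta]
    exact min_eq_left hb
  · intro g hg
    rw [Finset.mem_filter] at hg
    obtain ⟨hg1, hg2⟩ := hg
    have hle : ∀ i : Fin (M + 1), min (g i.1) N = g i.1 := fun i =>
      min_eq_left (g_le M N g hg1 i.1 i.isLt)
    have hmul : Nat.multinomial (Finset.range (M + 1)) g
        = Nat.multinomial Finset.univ
            (fun i : Fin (M + 1) => ((⟨min (g i.1) N, by omega⟩ : Fin (N + 1)) : ℕ)) := by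
      unfold Nat.multinomial
      simp only [hle]
      rw [Fin.sum_univ_eq_sum_range, Fin.prod_univ_eq_prod_range (fun i => (g i).factorial)]
    rw [hmul]
    simp only [hle]
    rw [← Fin.prod_univ_eq_prod_range (fun i => (Z1 q i (M - i)) ^ g i)]
    ring
end
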